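/- arXiv:2308.06058 — 12 statements merged into one kernel-verified Lean document; each statement's English description precedes it below -/
import Mathlib

section
/- For every natural number T and every finite sequence of nonnegative real numbers a_0, …, a_T, one has √(Σ_{t=0}^T a_t) ≤ Σ_{t=0}^T a_t / √(Σ_{i=0}^t a_i) ≤ 2·√(Σ_{t=0}^T a_t), where any summand whose denominator √(Σ_{i=0}^t a_i) is zero is interpreted as 0. -/
open Finset

lemma aux_sum_nonneg (a : ℕ → ℝ) (ha : ∀ t, 0 ≤ a t) (n : ℕ) :
    0 ≤ ∑ t ∈ range n, a t :=
  Finset.sum_nonneg fun t _ => ha t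

lemma aux_lower (a : ℕ → ℝ) (ha : ∀ t, 0 ≤ a t) (T : ℕ) :
    Real.sqrt (∑ t ∈ range (T + 1), a t) ≤
      ∑ t ∈ range (T + 1), a t / Real.sqrt (∑ i ∈ range (t + 1), a i) := by
  have key : ∑ t ∈ range (T + 1), a t / Real.sqrt (∑ i ∈ range (T + 1), a i) ≤
      ∑ t ∈ range (T + 1), a t / Real.sqrt (∑ i ∈ range (t + 1), a i) := by
    apply Finset.sum_le_sum
    intro t ht
    have htT : t + 1 ≤ T + 1 := Finset.mem_range.mp ht
    have hmono : ∑ i ∈ range (t + 1), a i ≤ ∑ i ∈ range (T + 1), a i := by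
      apply Finset.sum_le_sum_of_subset_of_nonneg (Finset.range_subset_range.mpr htT)
      intro i _ _; exact ha i
    by_cases hz : (∑ i ∈ range (t + 1), a i) = 0
    · have hat : a t = 0 := by
        have := Finset.sum_eq_zero_iff_of_nonneg (fun i _ => ha i) |>.mp hz t
          (Finset.mem_range.mpr (Nat.lt_succ_self t))
        exact this
      simp [hat]
    · have hpos : 0 < ∑ i ∈ range (t + 1), a i :=
        lt_of_le_of_ne (aux_sum_nonneg a ha _) (Ne.symm hz)
      apply div_le_div_of_nonneg_left (ha t) (Real.sqrt_pos.mpr hpos)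
      exact Real.sqrt_le_sqrt hmono
  calc Real.sqrt (∑ t ∈ range (T + 1), a t)
      = ∑ t ∈ range (T + 1), a t / Real.sqrt (∑ i ∈ range (T + 1), a i) := by
        rw [← Finset.sum_div, Real.div_sqrt]
    _ ≤ _ := key

lemma aux_upper (a : ℕ → ℝ) (ha : ∀ t, 0 ≤ a t) (T : ℕ) :
    ∑ t ∈ range (T + 1), a t / Real.sqrt (∑ i ∈ range (t + 1), a i) ≤
      2 * Real.sqrt (∑ t ∈ range (T + 1), a t) := by
  induction T with
  | zero => simp [Real.div_sqrt]
            nlinarith [Real.sqrt_nonneg (a 0)]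
  | succ T ih =>
    rw [Finset.sum_range_succ]
    have hstep : a (T + 1) / Real.sqrt (∑ i ∈ range (T + 1 + 1), a i) ≤
        2 * Real.sqrt (∑ t ∈ range (T + 1 + 1), a t) -
        2 * Real.sqrt (∑ t ∈ range (T + 1), a t) := by
      set S := ∑ t ∈ range (T + 1), a t with hS
      have hS' : ∑ t ∈ range (T + 1 + 1), a t = S + a (T + 1) :=
        Finset.sum_range_succ a (T + 1)
      rw [hS']
      have hSnn : 0 ≤ S := aux_sum_nonneg a ha _
      have hann : 0 ≤ a (T + 1) := ha _
      by_cases hz : S + a (T + 1) = 0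
      · have h1 : a (T + 1) = 0 := by linarith
        simp [hz, h1]
      · have hpos : 0 < S + a (T + 1) := lt_of_le_of_ne (by linarith) (Ne.symm hz)
        have hy : 0 < Real.sqrt (S + a (T + 1)) := Real.sqrt_pos.mpr hpos
        rw [div_le_iff₀ hy]
        have hx2 : Real.sqrt S ^ 2 = S := Real.sq_sqrt hSnn
        have hy2 : Real.sqrt (S + a (T + 1)) ^ 2 = S + a (T + 1) :=
          Real.sq_sqrt (by linarith)
        have hxy : Real.sqrt S ≤ Real.sqrt (S + a (T + 1)) :=
          Real.sqrt_le_sqrt (by linarith)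
        nlinarith [sq_nonneg (Real.sqrt (S + a (T + 1)) - Real.sqrt S)]
    linarith
/-- For every natural number `T` and every finite sequence of nonnegative reals
`a 0, …, a T`, one has
`√(Σ_{t=0}^T a t) ≤ Σ_{t=0}^T a t / √(Σ_{i=0}^t a i) ≤ 2·√(Σ_{t=0}^T a t)`,
with the convention that division by zero yields zero. -/
theorem stmt_0 (T : ℕ) (a : ℕ → ℝ) (ha : ∀ t, t ≤ T → 0 ≤ a t) :
    Real.sqrt (∑ t ∈ range (T + 1), a t) ≤
      (∑ t ∈ range (T + 1), a t / Real.sqrt (∑ i ∈ range (t + 1), a i)) ∧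
    (∑ t ∈ range (T + 1), a t / Real.sqrt (∑ i ∈ range (t + 1), a i)) ≤
      2 * Real.sqrt (∑ t ∈ range (T + 1), a t) := by
  set b : ℕ → ℝ := fun t => if t ≤ T then a t else 0 with hb
  have hbnn : ∀ t, 0 ≤ b t := by
    intro t; simp only [hb]; split
    · exact ha t ‹_›
    · exact le_refl 0
  have h1 : ∑ t ∈ range (T + 1), a t = ∑ t ∈ range (T + 1), b t := by
    apply Finset.sum_congr rfl
    intro t ht
    have : t ≤ T := Nat.lt_succ_iff.mp (Finset.mem_range.mp ht)
    simp [hb, this]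
  have h2 : ∑ t ∈ range (T + 1), a t / Real.sqrt (∑ i ∈ range (t + 1), a i) =
      ∑ t ∈ range (T + 1), b t / Real.sqrt (∑ i ∈ range (t + 1), b i) := by
    apply Finset.sum_congr rfl
    intro t ht
    have htT : t ≤ T := Nat.lt_succ_iff.mp (Finset.mem_range.mp ht)
    have hinner : ∑ i ∈ range (t + 1), a i = ∑ i ∈ range (t + 1), b i := by
      apply Finset.sum_congr rfl
      intro i hi
      have : i ≤ T := le_trans (Nat.lt_succ_iff.mp (Finset.mem_range.mp hi)) htT
      simp [hb, this]
    rw [hinner, hb]; simp [htT]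
  rw [h1, h2]
  exact ⟨aux_lower b hbnn T, aux_upper b hbnn T⟩
end

section
/- For every natural number T and every finite sequence of real numbers a_0, …, a_T with a_0 ≥ 1 and a_t ≥ 0 for all t, one has Σ_{t=0}^T a_t / (Σ_{i=0}^t a_i) ≤ log(Σ_{t=0}^T a_t) + 1. -/
open Finset

/-!
Writing `S t = ∑_{i ≤ t} a i`, each term `a t / S t = 1 - S (t-1) / S t` with `t ≥ 1` is at most
`log S t - log S (t-1)` by `1 - 1/x ≤ log x`, so the sum telescopes to `1 + log S T - log (a 0)`,
and `log (a 0) ≥ 0`.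
-/

namespace Real

theorem sub_div_le_log_sub_log {x y : ℝ} (hx : 0 < x) (hy : 0 < y) :
    (y - x) / y ≤ log y - log x := by
  have h := one_sub_inv_le_log_of_pos (div_pos hy hx)
  rwa [log_div hy.ne' hx.ne', inv_div, one_sub_div hy.ne'] at h

end Real

theorem sum_range_pos_of_nonneg {a : ℕ → ℝ} {T : ℕ} (ha0 : 0 < a 0)
    (ha : ∀ t, t ≤ T → 0 ≤ a t) : 0 < ∑ i ∈ range (T + 1), a i := by
  rw [sum_range_succ']
  have : 0 ≤ ∑ i ∈ range T, a (i + 1) :=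
    sum_nonneg fun i hi => ha _ (mem_range.mp hi)
  linarith

theorem sum_div_partial_sum_le_log (T : ℕ) (a : ℕ → ℝ) (ha0 : 0 < a 0)
    (ha : ∀ t, t ≤ T → 0 ≤ a t) :
    ∑ t ∈ range (T + 1), a t / (∑ i ∈ range (t + 1), a i) ≤
      1 + Real.log (∑ t ∈ range (T + 1), a t) - Real.log (a 0) := by
  induction T with
  | zero => simp [ha0.ne']
  | succ T ih =>
    have ha' : ∀ t, t ≤ T → 0 ≤ a t := fun t ht => ha t (ht.trans T.le_succ)
    have hS : 0 < ∑ i ∈ range (T + 1), a i := sum_range_pos_of_nonneg ha0 ha'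
    have hS' : 0 < ∑ i ∈ range (T + 1 + 1), a i := sum_range_pos_of_nonneg ha0 ha
    have step := Real.sub_div_le_log_sub_log hS hS'
    rw [sum_range_succ a (T + 1), add_sub_cancel_left] at step
    rw [sum_range_succ (fun t => a t / _), sum_range_succ a (T + 1)]
    linarith [ih ha']

/-- For every natural number `T` and every finite sequence of reals `a 0, …, a T`
with `a 0 ≥ 1` and `a t ≥ 0` for all `t`, one has
`Σ_{t=0}^T a t / (Σ_{i=0}^t a i) ≤ log(Σ_{t=0}^T a t) + 1`. -/
theorem stmt_1 (T : ℕ) (a : ℕ → ℝ) (ha0 : 1 ≤ a 0) (ha : ∀ t, t ≤ T → 0 ≤ a t) :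
    (∑ t ∈ range (T + 1), a t / (∑ i ∈ range (t + 1), a i)) ≤
      Real.log (∑ t ∈ range (T + 1), a t) + 1 := by
  have := sum_div_partial_sum_le_log T a (one_pos.trans_le ha0) ha
  linarith [Real.log_nonneg ha0]
end

section
/- Let f : E → ℝ be differentiable and L-smooth (L > 0), let x ∈ E, let ρ ∈ (0,1), β ∈ [1/2, 1) and γ_max > 0. Then: (i) there exists k ∈ ℕ such that γ_max·β^k satisfies the Armijo condition for f at x; and (ii) if k* is the least such k and γ = γ_max·β^{k*} is the backtracking line-search output, then min{(1 − ρ)/L, γ_max} ≤ γ ≤ γ_max. -/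
/-!
By the descent lemma, an `L`-smooth `f` satisfies
`f (x - γ • ∇f x) ≤ f x - γ (1 - L γ / 2) ‖∇f x‖²`, so the Armijo condition holds for every
step `0 ≤ γ ≤ 2 (1 - ρ) / L`. Since `β < 1`, the trial steps `γ_max β^k` eventually fall below
this threshold. If the first accepted step is not `γ_max` itself, the step just before it was
rejected and hence exceeded `2 (1 - ρ) / L`; as `β ≥ 1/2`, the accepted one is at least
`(1 - ρ) / L`.
-/

open Set Filter Topology InnerProductSpace

section Descent

variable {E : Type*} [NormedAddCommGroup E] [InnerProductSpace ℝ E] [CompleteSpace E]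

theorem HasGradientAt.hasDerivAt_comp_add_smul {f : E → ℝ} {g x v : E} {t : ℝ}
    (hf : HasGradientAt f g (x + t • v)) :
    HasDerivAt (fun s : ℝ => f (x + s • v)) ⟪g, v⟫_ℝ t := by
  have hline : HasDerivAt (fun s : ℝ => x + s • v) v t := by
    simpa using ((hasDerivAt_id t).smul_const v).const_add x
  have h := hf.hasFDerivAt.comp_hasDerivAt t hline
  rw [toDual_apply_apply] at h
  exact h

theorem descent_lemma {f : E → ℝ} {G : E → E} {L : ℝ}
    (hgrad : ∀ y, HasGradientAt f (G y) y) (hsmooth : ∀ u v, ‖G u - G v‖ ≤ L * ‖u - v‖)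
    (x v : E) : f (x + v) ≤ f x + ⟪G x, v⟫_ℝ + L / 2 * ‖v‖ ^ 2 := by
  set φ : ℝ → ℝ := fun t => f (x + t • v) - t * ⟪G x, v⟫_ℝ - L / 2 * ‖v‖ ^ 2 * t ^ 2
  have hφ : ∀ t, HasDerivAt φ (⟪G (x + t • v) - G x, v⟫_ℝ - L * ‖v‖ ^ 2 * t) t := by
    intro t
    have h := (((hgrad (x + t • v)).hasDerivAt_comp_add_smul).sub
      ((hasDerivAt_id t).mul_const ⟪G x, v⟫_ℝ)).sub ((hasDerivAt_pow 2 t).const_mul (L / 2 * ‖v‖ ^ 2))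
    refine h.congr_deriv ?_
    simp only [inner_sub_left, one_mul, Nat.cast_ofNat]
    ring
  have hφ'_nonpos : ∀ t ∈ Ici (0 : ℝ), ⟪G (x + t • v) - G x, v⟫_ℝ ≤ L * ‖v‖ ^ 2 * t :=
    fun t ht => calc
      ⟪G (x + t • v) - G x, v⟫_ℝ ≤ ‖G (x + t • v) - G x‖ * ‖v‖ := real_inner_le_norm _ _
      _ ≤ L * ‖t • v‖ * ‖v‖ := by gcongr; simpa using hsmooth (x + t • v) x
      _ = L * ‖v‖ ^ 2 * t := by rw [norm_smul, Real.norm_of_nonneg ht]; ring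
  have hanti : AntitoneOn φ (Ici 0) :=
    antitoneOn_of_hasDerivWithinAt_nonpos (convex_Ici 0)
      (fun t _ => (hφ t).continuousAt.continuousWithinAt) (fun t _ => (hφ t).hasDerivWithinAt)
      (fun t ht => sub_nonpos.2 (hφ'_nonpos t (interior_subset ht)))
  have h01 := hanti (mem_Ici.2 le_rfl) (mem_Ici.2 zero_le_one) zero_le_one
  norm_num [φ] at h01
  linarith

end Descent

section Armijo

variable {E : Type*} [NormedAddCommGroup E] [InnerProductSpace ℝ E]

def ArmijoCondition (f : E → ℝ) (G : E → E) (ρ : ℝ) (x : E) (γ : ℝ) : Prop :=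
  f (x - γ • G x) ≤ f x - ρ * γ * ‖G x‖ ^ 2

variable [CompleteSpace E] {f : E → ℝ} {G : E → E} {L ρ : ℝ}

theorem armijoCondition_of_mul_le (hgrad : ∀ y, HasGradientAt f (G y) y)
    (hsmooth : ∀ u v, ‖G u - G v‖ ≤ L * ‖u - v‖) (x : E) {γ : ℝ} (hγ₀ : 0 ≤ γ)
    (hγ : L * γ ≤ 2 * (1 - ρ)) : ArmijoCondition f G ρ x γ := by
  have hd := descent_lemma hgrad hsmooth x (-(γ • G x))
  rw [← sub_eq_add_neg, inner_neg_right, real_inner_smul_right, real_inner_self_eq_norm_sq,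
    norm_neg, norm_smul, Real.norm_of_nonneg hγ₀] at hd
  have : L * γ * (γ * ‖G x‖ ^ 2) ≤ 2 * (1 - ρ) * (γ * ‖G x‖ ^ 2) := by gcongr
  unfold ArmijoCondition
  nlinarith

theorem exists_armijoCondition_mul_pow (hgrad : ∀ y, HasGradientAt f (G y) y)
    (hsmooth : ∀ u v, ‖G u - G v‖ ≤ L * ‖u - v‖) (x : E) (hρ : ρ < 1) {β γmax : ℝ}
    (hβ₀ : 0 ≤ β) (hβ₁ : β < 1) (hγmax : 0 ≤ γmax) :
    ∃ k : ℕ, ArmijoCondition f G ρ x (γmax * β ^ k) := by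
  have hlim : Tendsto (fun k : ℕ => L * γmax * β ^ k) atTop (𝓝 0) := by
    simpa using (tendsto_pow_atTop_nhds_zero_of_lt_one hβ₀ hβ₁).const_mul (L * γmax)
  obtain ⟨k, hk⟩ := (hlim.eventually (gt_mem_nhds (by linarith : (0 : ℝ) < 2 * (1 - ρ)))).exists
  exact ⟨k, armijoCondition_of_mul_le hgrad hsmooth x (by positivity) (by linarith)⟩

theorem min_le_of_forall_lt_not_armijoCondition (hgrad : ∀ y, HasGradientAt f (G y) y)
    (hsmooth : ∀ u v, ‖G u - G v‖ ≤ L * ‖u - v‖) (hL : 0 < L) {x : E} {β γmax : ℝ}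
    (hβ : 1 / 2 ≤ β) (hγmax : 0 ≤ γmax) {k : ℕ}
    (hrejected : ∀ j < k, ¬ ArmijoCondition f G ρ x (γmax * β ^ j)) :
    min ((1 - ρ) / L) γmax ≤ γmax * β ^ k := by
  have hβ₀ : 0 ≤ β := by linarith
  cases k with
  | zero => simp
  | succ m =>
    have hlarge : 2 * (1 - ρ) < L * (γmax * β ^ m) := by
      by_contra! h
      exact hrejected m m.lt_succ_self
        (armijoCondition_of_mul_le hgrad hsmooth x (by positivity) h)
    have hstep : 0 ≤ L * (γmax * β ^ m) := by positivity
    refine (min_le_left _ _).trans ((div_le_iff₀' hL).2 ?_)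
    rw [pow_succ, ← mul_assoc, ← mul_assoc]
    nlinarith

end Armijo

/-- Backtracking line-search: for a differentiable `L`-smooth `f` (`L > 0`),
`ρ ∈ (0,1)`, `β ∈ [1/2, 1)`, `γ_max > 0` and any point `x`:
(i) some `γ_max·β^k` satisfies the Armijo condition for `f` at `x`; and
(ii) if `k` is the least such index (i.e. `γ = γ_max·β^k` is the backtracking
line-search output), then `min{(1 − ρ)/L, γ_max} ≤ γ ≤ γ_max`. -/
theorem stmt_8 {d : ℕ} (L ρ β γmax : ℝ) (hL : 0 < L) (hρ : ρ ∈ Set.Ioo (0 : ℝ) 1)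
    (hβ : β ∈ Set.Ico (1 / 2 : ℝ) 1) (hγmax : 0 < γmax)
    (f : EuclideanSpace ℝ (Fin d) → ℝ)
    (G : EuclideanSpace ℝ (Fin d) → EuclideanSpace ℝ (Fin d))
    (hgrad : ∀ y, HasGradientAt f (G y) y)
    (hsmooth : ∀ u v, ‖G u - G v‖ ≤ L * ‖u - v‖)
    (x : EuclideanSpace ℝ (Fin d)) :
    (∃ k : ℕ, f (x - (γmax * β ^ k) • G x) ≤ f x - ρ * (γmax * β ^ k) * ‖G x‖ ^ 2) ∧
    (∀ k : ℕ,
      f (x - (γmax * β ^ k) • G x) ≤ f x - ρ * (γmax * β ^ k) * ‖G x‖ ^ 2 →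
      (∀ j < k, ¬ (f (x - (γmax * β ^ j) • G x) ≤ f x - ρ * (γmax * β ^ j) * ‖G x‖ ^ 2)) →
      min ((1 - ρ) / L) γmax ≤ γmax * β ^ k ∧ γmax * β ^ k ≤ γmax) := by
  obtain ⟨-, hρ₁⟩ := hρ
  obtain ⟨hβ_half, hβ₁⟩ := hβ
  have hβ₀ : 0 ≤ β := by linarith
  refine ⟨exists_armijoCondition_mul_pow hgrad hsmooth x hρ₁ hβ₀ hβ₁ hγmax.le,
    fun k _ hrejected => ⟨?_, ?_⟩⟩
  · exact min_le_of_forall_lt_not_armijoCondition hgrad hsmooth hL hβ_half hγmax.le hrejected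
  · exact mul_le_of_le_one_right hγmax.le (pow_le_one₀ hβ₀ hβ₁.le)
end

section
/- Let L > 0 and c_p > 0. For each t ∈ ℕ let f_t : E → ℝ be differentiable and L-smooth, let ℓ_t ∈ ℝ satisfy ℓ_t ≤ f_t(y) for all y ∈ E, and let x_t ∈ E be a point with ∇f_t(x_t) ≠ 0. Let (η_t) be the AdaSPS stepsizes. Then for every t ∈ ℕ: 1/(2c_p L · √(Σ_{s=0}^t (f_s(x_s) − ℓ_s))) ≤ η_t ≤ (f_t(x_t) − ℓ_t)/(c_p‖∇f_t(x_t)‖² · √(Σ_{s=0}^t (f_s(x_s) − ℓ_s))). -/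
/-! By the descent lemma, a step `-∇f/L` from `x` lowers an `L`-smooth `f` by at least
`‖∇f(x)‖²/(2L)`, and `f` is bounded below by `ℓ`, so `‖∇f_t(x_t)‖² ≤ 2L (f_t(x_t) - ℓ_t)`.
Hence the first argument of each `min` is at least `1/(2 c_p L √S_t)`, and this lower bound
decreases in `t` since the partial sums `S_t` of the positive gaps increase. -/

open Finset
open scoped RealInnerProductSpace

section Smooth

variable {E : Type*} [NormedAddCommGroup E] [InnerProductSpace ℝ E] [CompleteSpace E]
  {L : ℝ} {f : E → ℝ} {G : E → E}

theorem le_add_inner_add_half_mul_sq_of_lipschitz_gradient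
    (hgrad : ∀ y, HasGradientAt f (G y) y) (hsmooth : ∀ u v, ‖G u - G v‖ ≤ L * ‖u - v‖)
    (x v : E) : f (x + v) ≤ f x + ⟪G x, v⟫ + L / 2 * ‖v‖ ^ 2 := by
  -- `ψ` is antitone on `[0, 1]` since `ψ' t = ⟪G (x + t • v) - G x, v⟫ - L t ‖v‖² ≤ 0`.
  set ψ : ℝ → ℝ := fun t => f (x + t • v) - t * ⟪G x, v⟫ - L / 2 * t ^ 2 * ‖v‖ ^ 2
  have hψ : ∀ t : ℝ, HasDerivAt ψ (⟪G (x + t • v), v⟫ - ⟪G x, v⟫ - L * t * ‖v‖ ^ 2) t := by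
    intro t
    have hline : HasDerivAt (fun t : ℝ => x + t • v) v t := by
      simpa using ((hasDerivAt_id t).smul_const v).const_add x
    have hf : HasDerivAt (fun t : ℝ => f (x + t • v)) ⟪G (x + t • v), v⟫ t := by
      have := (hgrad (x + t • v)).hasFDerivAt.comp_hasDerivAt t hline
      simp only [InnerProductSpace.toDual_apply_apply] at this
      exact this
    have hquad : HasDerivAt (fun t : ℝ => L / 2 * t ^ 2 * ‖v‖ ^ 2) (L * t * ‖v‖ ^ 2) t := by
      refine (((hasDerivAt_pow 2 t).const_mul (L / 2)).mul_const (‖v‖ ^ 2)).congr_deriv ?_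
      push_cast
      ring
    exact (hf.sub (by simpa using (hasDerivAt_id t).mul_const ⟪G x, v⟫)).sub hquad
  have hanti : AntitoneOn ψ (Set.Icc 0 1) := by
    refine antitoneOn_of_deriv_nonpos (convex_Icc 0 1)
      (fun t _ => (hψ t).continuousAt.continuousWithinAt)
      (fun t _ => (hψ t).differentiableAt.differentiableWithinAt) fun t ht => ?_
    rw [interior_Icc] at ht
    have hinner : ⟪G (x + t • v) - G x, v⟫ ≤ L * t * ‖v‖ ^ 2 :=
      calc ⟪G (x + t • v) - G x, v⟫ ≤ ‖G (x + t • v) - G x‖ * ‖v‖ := real_inner_le_norm _ _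
        _ ≤ L * ‖x + t • v - x‖ * ‖v‖ := by gcongr; exact hsmooth _ _
        _ = L * t * ‖v‖ ^ 2 := by
          rw [add_sub_cancel_left, norm_smul, Real.norm_eq_abs, abs_of_pos ht.1]
          ring
    rw [(hψ t).deriv]
    rw [inner_sub_left] at hinner
    linarith
  have h01 := hanti (Set.left_mem_Icc.2 zero_le_one) (Set.right_mem_Icc.2 zero_le_one)
    zero_le_one
  simp only [ψ, zero_smul, add_zero, zero_mul, sub_zero, one_smul, one_mul, one_pow,
    ne_eq, OfNat.ofNat_ne_zero, not_false_eq_true, zero_pow, mul_zero] at h01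
  linarith

theorem norm_gradient_sq_le_of_lipschitz_gradient (hL : 0 < L) {ℓ : ℝ}
    (hgrad : ∀ y, HasGradientAt f (G y) y) (hsmooth : ∀ u v, ‖G u - G v‖ ≤ L * ‖u - v‖)
    (hℓ : ∀ y, ℓ ≤ f y) (x : E) : ‖G x‖ ^ 2 ≤ 2 * L * (f x - ℓ) := by
  have hdescent := le_add_inner_add_half_mul_sq_of_lipschitz_gradient hgrad hsmooth x
    (-L⁻¹ • G x)
  rw [real_inner_smul_right, real_inner_self_eq_norm_sq, norm_smul, norm_neg,
    Real.norm_eq_abs, abs_of_pos (inv_pos.2 hL)] at hdescent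
  have hvalue : f x + -L⁻¹ * ‖G x‖ ^ 2 + L / 2 * (L⁻¹ * ‖G x‖) ^ 2 =
      f x - ‖G x‖ ^ 2 / (2 * L) := by
    field_simp
    ring
  have hdecrease : ‖G x‖ ^ 2 / (2 * L) ≤ f x - ℓ := by
    linarith [hℓ (x + -L⁻¹ • G x)]
  rwa [div_le_iff₀ (by positivity), mul_comm] at hdecrease

end Smooth

theorem le_and_le_of_eq_min_succ {α : Type*} [LinearOrder α] {a b η : ℕ → α}
    (hb : Antitone b) (hba : ∀ t, b t ≤ a t) (h0 : η 0 = a 0)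
    (hη : ∀ t, η (t + 1) = min (a (t + 1)) (η t)) (t : ℕ) : b t ≤ η t ∧ η t ≤ a t := by
  induction t with
  | zero => rw [h0]; exact ⟨hba 0, le_rfl⟩
  | succ t ih =>
    rw [hη t]
    exact ⟨le_min (hba _) ((hb t.le_succ).trans ih.1), min_le_left _ _⟩

theorem one_div_le_div_of_le_mul {L c g δ r : ℝ} (hL : 0 < L) (hg : 0 < g)
    (hgδ : g ≤ 2 * L * δ) (hc : 0 ≤ c) (hr : 0 ≤ r) :
    1 / (2 * c * L * r) ≤ δ / (c * g * r) :=
  calc 1 / (2 * c * L * r) = 1 / (2 * L) / (c * r) := by ring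
    _ ≤ δ / g / (c * r) := by
      refine div_le_div_of_nonneg_right ?_ (by positivity)
      rw [div_le_div_iff₀ (by positivity) hg]
      linarith
    _ = δ / (c * g * r) := by ring

/-- Bounds for the AdaSPS stepsize: if each `f t` is differentiable and `L`-smooth,
`ℓ t` lower-bounds `f t`, `∇f_t (x t) ≠ 0`, and `η` is the AdaSPS stepsize sequence,
then for every `t`,
`1/(2 c_p L √(Σ_{s≤t} (f_s(x_s) − ℓ_s))) ≤ η t ≤
 (f_t(x_t) − ℓ_t)/(c_p ‖∇f_t(x_t)‖² √(Σ_{s≤t} (f_s(x_s) − ℓ_s)))`. -/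
theorem stmt_9 {d : ℕ} (L c_p : ℝ) (hL : 0 < L) (hcp : 0 < c_p)
    (f : ℕ → EuclideanSpace ℝ (Fin d) → ℝ)
    (G : ℕ → EuclideanSpace ℝ (Fin d) → EuclideanSpace ℝ (Fin d))
    (x : ℕ → EuclideanSpace ℝ (Fin d)) (ℓ : ℕ → ℝ) (η : ℕ → ℝ)
    (hgrad : ∀ t y, HasGradientAt (f t) (G t y) y)
    (hsmooth : ∀ t u v, ‖G t u - G t v‖ ≤ L * ‖u - v‖)
    (hℓ : ∀ t y, ℓ t ≤ f t y)
    (hGne : ∀ t, G t (x t) ≠ 0)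
    (hη0 : η 0 = (f 0 (x 0) - ℓ 0) /
      (c_p * ‖G 0 (x 0)‖ ^ 2 * Real.sqrt (f 0 (x 0) - ℓ 0)))
    (hη : ∀ t, η (t + 1) = min
      ((f (t + 1) (x (t + 1)) - ℓ (t + 1)) /
        (c_p * ‖G (t + 1) (x (t + 1))‖ ^ 2 *
          Real.sqrt (∑ s ∈ range (t + 2), (f s (x s) - ℓ s))))
      (η t)) :
    ∀ t, 1 / (2 * c_p * L * Real.sqrt (∑ s ∈ range (t + 1), (f s (x s) - ℓ s))) ≤ η t ∧
      η t ≤ (f t (x t) - ℓ t) /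
        (c_p * ‖G t (x t)‖ ^ 2 * Real.sqrt (∑ s ∈ range (t + 1), (f s (x s) - ℓ s))) := by
  have hgrad_sq : ∀ t, ‖G t (x t)‖ ^ 2 ≤ 2 * L * (f t (x t) - ℓ t) := fun t =>
    norm_gradient_sq_le_of_lipschitz_gradient hL (hgrad t) (hsmooth t) (hℓ t) (x t)
  have hgrad_pos : ∀ t, 0 < ‖G t (x t)‖ ^ 2 := fun t => by positivity [norm_pos_iff.2 (hGne t)]
  have hgap_pos : ∀ t, 0 < f t (x t) - ℓ t := fun t => by nlinarith [hgrad_sq t, hgrad_pos t]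
  have hsum_pos : ∀ t, 0 < ∑ s ∈ range (t + 1), (f s (x s) - ℓ s) := fun t =>
    sum_pos (fun s _ => hgap_pos s) nonempty_range_add_one
  refine le_and_le_of_eq_min_succ (fun m n hmn => ?_)
    (fun t => one_div_le_div_of_le_mul hL (hgrad_pos t) (hgrad_sq t) hcp.le (Real.sqrt_nonneg _))
    (by rw [hη0, sum_range_one]) hη
  have hsum_m_pos := hsum_pos m
  gcongr
  exact fun s _ _ => (hgap_pos s).le
end

section
/- Let L > 0, c_p > 0, D ≥ 0 and x* ∈ E. For each t ∈ ℕ let f_t : E → ℝ be differentiable and L-smooth, let ℓ_t ∈ ℝ satisfy ℓ_t ≤ f_t(y) for all y ∈ E, and let x_t ∈ E be points with ∇f_t(x_t) ≠ 0. Let (η_t) be the AdaSPS stepsizes, and assume that for all t: ‖x_{t+1} − x*‖ ≤ ‖x_t − η_t∇f_t(x_t) − x*‖ (as holds for projected SGD onto a convex set containing x*, by nonexpansiveness of the Euclidean projection) and ‖x_t − x*‖ ≤ D. Then for every T ≥ 1: Σ_{t=0}^{T−1} ⟨∇f_t(x_t), x_t − x*⟩ ≤ (2c_p L D² + 1/c_p)·√(Σ_{t=0}^{T−1}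 (f_t(x_t) − ℓ_t)). -/
open Finset RealInnerProductSpace

/-!
Smoothness and the lower bounds `ℓ_t` give `‖∇f_t(x_t)‖² ≤ 4L (f_t(x_t) - ℓ_t)`, so every AdaSPS
stepsize is at least `1 / (4 c_p L √S_t)`, where `S_t` is the partial sum of the gaps
`f_s(x_s) - ℓ_s`. Expanding the nonexpansive step bounds `⟪∇f_t(x_t), x_t - x*⟫` by
`(‖x_t - x*‖² - ‖x_{t+1} - x*‖²) / (2η_t) + η_t ‖∇f_t(x_t)‖² / 2`. As `η` is nonincreasing, the
first terms telescope to at most `D² / (2η_{T-1}) ≤ 2 c_p L D² √S_{T-1}`; by the definition of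
`η_t` the second ones are at most `(f_t(x_t) - ℓ_t) / (2 c_p √S_t)`, and these sum to at most
`√S_{T-1} / c_p`.
-/

section LipschitzGradient

variable {E : Type*} [NormedAddCommGroup E] [InnerProductSpace ℝ E] [CompleteSpace E]
  {f : E → ℝ} {G : E → E} {L : ℝ}

theorem le_add_inner_add_of_lipschitz_gradient (hL : 0 ≤ L)
    (hgrad : ∀ y, HasGradientAt f (G y) y) (hsmooth : ∀ u v, ‖G u - G v‖ ≤ L * ‖u - v‖)
    (x y : E) : f y ≤ f x + ⟪G x, y - x⟫ + L * ‖y - x‖ ^ 2 := by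
  have hmv : ‖f y - f x - InnerProductSpace.toDual ℝ E (G x) (y - x)‖ ≤
      L * ‖y - x‖ * ‖y - x‖ := by
    refine (convex_segment x y).norm_image_sub_le_of_norm_hasFDerivWithin_le'
      (fun z _ => (hgrad z).hasFDerivAt.hasFDerivWithinAt) (fun z hz => ?_)
      (left_mem_segment ℝ x y) (right_mem_segment ℝ x y)
    rw [← map_sub, LinearIsometryEquiv.norm_map]
    exact (hsmooth z x).trans (by gcongr; exact norm_sub_le_of_mem_segment hz)
  rw [InnerProductSpace.toDual_apply_apply, Real.norm_eq_abs] at hmv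
  linarith [le_abs_self (f y - f x - ⟪G x, y - x⟫)]

theorem sq_norm_le_of_lipschitz_gradient (hL : 0 < L) (hgrad : ∀ y, HasGradientAt f (G y) y)
    (hsmooth : ∀ u v, ‖G u - G v‖ ≤ L * ‖u - v‖) {ℓ : ℝ} (hℓ : ∀ y, ℓ ≤ f y) (x : E) :
    ‖G x‖ ^ 2 ≤ 4 * L * (f x - ℓ) := by
  have h := le_add_inner_add_of_lipschitz_gradient hL.le hgrad hsmooth x (x - (2 * L)⁻¹ • G x)
  rw [sub_sub_cancel_left, inner_neg_right, real_inner_smul_right, real_inner_self_eq_norm_sq,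
    norm_neg, norm_smul, Real.norm_of_nonneg (by positivity), mul_pow] at h
  have h₁ : (2 * L)⁻¹ * ‖G x‖ ^ 2 = 2 * (‖G x‖ ^ 2 / (4 * L)) := by field_simp; ring
  have h₂ : L * ((2 * L)⁻¹ ^ 2 * ‖G x‖ ^ 2) = ‖G x‖ ^ 2 / (4 * L) := by field_simp; ring
  have hgap : ‖G x‖ ^ 2 / (4 * L) ≤ f x - ℓ := by
    linarith [hℓ (x - (2 * L)⁻¹ • G x)]
  exact (div_le_iff₀' (by positivity)).1 hgap

end LipschitzGradient

theorem inner_le_of_norm_le_norm_sub_smul {E : Type*} [NormedAddCommGroup E]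
    [InnerProductSpace ℝ E] {u v w : E} {η : ℝ} (hη : 0 < η) (h : ‖w‖ ≤ ‖u - η • v‖) :
    ⟪v, u⟫ ≤ (‖u‖ ^ 2 - ‖w‖ ^ 2) / (2 * η) + η * ‖v‖ ^ 2 / 2 := by
  have hsq := pow_le_pow_left₀ (norm_nonneg w) h 2
  rw [norm_sub_sq_real, real_inner_smul_right, real_inner_comm, norm_smul, Real.norm_eq_abs,
    mul_pow, sq_abs] at hsq
  rw [div_add_div _ _ (by positivity) two_ne_zero, le_div_iff₀ (by positivity)]
  nlinarith

theorem sum_range_sub_div_le_of_antitone {r η : ℕ → ℝ} {R : ℝ} (hr : ∀ t, 0 ≤ r t)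
    (hR : ∀ t, r t ≤ R) (hη : ∀ t, 0 < η t) (hanti : Antitone η) (T : ℕ) :
    ∑ t ∈ range (T + 1), (r t - r (t + 1)) / η t ≤ R / η T := by
  suffices ∑ t ∈ range (T + 1), (r t - r (t + 1)) / η t ≤ (R - r (T + 1)) / η T from
    this.trans (div_le_div_of_nonneg_right (by linarith [hr (T + 1)]) (hη T).le)
  induction T with
  | zero => rw [sum_range_one]; gcongr; exacts [(hη 0).le, hR 0]
  | succ T ih =>
    rw [sum_range_succ]
    have : (R - r (T + 1)) / η T ≤ (R - r (T + 1)) / η (T + 1) :=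
      div_le_div_of_nonneg_left (by linarith [hR (T + 1)]) (hη _) (hanti T.le_succ)
    have hsplit : (R - r (T + 1)) / η (T + 1) + (r (T + 1) - r (T + 1 + 1)) / η (T + 1) =
        (R - r (T + 1 + 1)) / η (T + 1) := by rw [← add_div, sub_add_sub_cancel]
    linarith

theorem sum_div_sqrt_sum_range_le {a : ℕ → ℝ} (ha : ∀ t, 0 ≤ a t) (T : ℕ) :
    ∑ t ∈ range T, a t / √(∑ s ∈ range (t + 1), a s) ≤ 2 * √(∑ t ∈ range T, a t) := by
  induction T with
  | zero => simp
  | succ T ih =>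
    rw [sum_range_succ, sum_range_succ a]
    set P := ∑ t ∈ range T, a t
    have hP : 0 ≤ P := sum_nonneg fun t _ => ha t
    have hmono : √P ≤ √(P + a T) := Real.sqrt_le_sqrt (le_add_of_nonneg_right (ha T))
    -- `a = r² - s² ≤ 2 r (r - s)` for `r = √(P + a) ≥ s = √P ≥ 0`
    have hstep : a T / √(P + a T) ≤ 2 * √(P + a T) - 2 * √P := by
      rcases (Real.sqrt_nonneg (P + a T)).eq_or_lt with h | h
      · rw [← h, div_zero]
        linarith [Real.sqrt_nonneg P]
      · rw [div_le_iff₀ h]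
        nlinarith [Real.sq_sqrt hP, Real.sq_sqrt (add_nonneg hP (ha T)), Real.sqrt_nonneg P]
    linarith

theorem sqrt_sum_range_pos_of_pos {a : ℕ → ℝ} (ha : ∀ t, 0 < a t) (t : ℕ) :
    0 < √(∑ s ∈ range (t + 1), a s) :=
  Real.sqrt_pos.2 (sum_pos (fun s _ => ha s) nonempty_range_add_one)

/-- The AdaSPS recursion, with `Δ t = f_t(x_t) - ℓ_t` and `g t = ‖∇f_t(x_t)‖²`. -/
def IsAdaSPS (c : ℝ) (Δ g η : ℕ → ℝ) : Prop :=
  η 0 = Δ 0 / (c * g 0 * √(Δ 0)) ∧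
    ∀ t, η (t + 1) = min (Δ (t + 1) / (c * g (t + 1) * √(∑ s ∈ range (t + 2), Δ s))) (η t)

namespace IsAdaSPS

variable {c L : ℝ} {Δ g η : ℕ → ℝ}

theorem antitone (h : IsAdaSPS c Δ g η) : Antitone η :=
  antitone_nat_of_succ_le fun t => (h.2 t).trans_le (min_le_right _ _)

theorem le_div (h : IsAdaSPS c Δ g η) (t : ℕ) :
    η t ≤ Δ t / (c * g t * √(∑ s ∈ range (t + 1), Δ s)) := by
  cases t with
  | zero => rw [h.1, sum_range_one]
  | succ t => exact (h.2 t).trans_le (min_le_left _ _)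

theorem inv_four_mul_sqrt_le (h : IsAdaSPS c Δ g η) (hc : 0 < c) (hL : 0 < L) (hΔ : ∀ t, 0 < Δ t)
    (hg : ∀ t, 0 < g t) (hgΔ : ∀ t, g t ≤ 4 * L * Δ t) (t : ℕ) :
    (4 * c * L * √(∑ s ∈ range (t + 1), Δ s))⁻¹ ≤ η t := by
  have hS := sqrt_sum_range_pos_of_pos hΔ
  have hcand : ∀ t, (4 * c * L * √(∑ s ∈ range (t + 1), Δ s))⁻¹ ≤
      Δ t / (c * g t * √(∑ s ∈ range (t + 1), Δ s)) := fun t => by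
    have := hS t; have := hg t; have := hΔ t
    calc (4 * c * L * √(∑ s ∈ range (t + 1), Δ s))⁻¹
        = Δ t / (c * (4 * L * Δ t) * √(∑ s ∈ range (t + 1), Δ s)) := by field_simp
      _ ≤ Δ t / (c * g t * √(∑ s ∈ range (t + 1), Δ s)) := by gcongr; exact hgΔ t
  induction t with
  | zero => rw [h.1]; simpa using hcand 0
  | succ t ih =>
    rw [h.2 t]
    refine le_min (hcand (t + 1)) (ih.trans' ?_)
    have := hS t
    gcongr
    · exact fun s _ _ => (hΔ s).le
    · omega

theorem pos (h : IsAdaSPS c Δ g η) (hc : 0 < c) (hL : 0 < L) (hΔ : ∀ t, 0 < Δ t)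
    (hg : ∀ t, 0 < g t) (hgΔ : ∀ t, g t ≤ 4 * L * Δ t) (t : ℕ) : 0 < η t :=
  have := sqrt_sum_range_pos_of_pos hΔ t
  (h.inv_four_mul_sqrt_le hc hL hΔ hg hgΔ t).trans_lt' (by positivity)

theorem sq_div_two_mul_le (h : IsAdaSPS c Δ g η) (hc : 0 < c) (hL : 0 < L) (hΔ : ∀ t, 0 < Δ t)
    (hg : ∀ t, 0 < g t) (hgΔ : ∀ t, g t ≤ 4 * L * Δ t) (D : ℝ) (t : ℕ) :
    D ^ 2 / (2 * η t) ≤ 2 * c * L * D ^ 2 * √(∑ s ∈ range (t + 1), Δ s) := by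
  have := sqrt_sum_range_pos_of_pos hΔ t
  rw [div_le_iff₀ (by linarith [h.pos hc hL hΔ hg hgΔ t])]
  calc D ^ 2 = 2 * c * L * D ^ 2 * √(∑ s ∈ range (t + 1), Δ s) *
        (2 * (4 * c * L * √(∑ s ∈ range (t + 1), Δ s))⁻¹) := by field_simp; ring
    _ ≤ 2 * c * L * D ^ 2 * √(∑ s ∈ range (t + 1), Δ s) * (2 * η t) := by
        gcongr; exact h.inv_four_mul_sqrt_le hc hL hΔ hg hgΔ t

theorem sum_mul_le (h : IsAdaSPS c Δ g η) (hc : 0 < c) (hΔ : ∀ t, 0 < Δ t) (hg : ∀ t, 0 < g t)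
    (T : ℕ) : ∑ t ∈ range T, η t * g t ≤ 2 * √(∑ t ∈ range T, Δ t) / c := by
  have hmul : ∀ t, η t * g t ≤ Δ t / √(∑ s ∈ range (t + 1), Δ s) / c := fun t =>
    calc η t * g t ≤ Δ t / (c * g t * √(∑ s ∈ range (t + 1), Δ s)) * g t :=
          mul_le_mul_of_nonneg_right (h.le_div t) (hg t).le
      _ = Δ t / √(∑ s ∈ range (t + 1), Δ s) / c := by field_simp [(hg t).ne']
  calc ∑ t ∈ range T, η t * g t ≤ ∑ t ∈ range T, Δ t / √(∑ s ∈ range (t + 1), Δ s) / c :=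
        sum_le_sum fun t _ => hmul t
    _ ≤ 2 * √(∑ t ∈ range T, Δ t) / c := by
        rw [← sum_div]; gcongr; exact sum_div_sqrt_sum_range_le (fun t => (hΔ t).le) T

end IsAdaSPS

theorem stmt_10_general {d : ℕ} (L c_p D : ℝ) (hL : 0 < L) (hcp : 0 < c_p)
    (xstar : EuclideanSpace ℝ (Fin d))
    (f : ℕ → EuclideanSpace ℝ (Fin d) → ℝ)
    (G : ℕ → EuclideanSpace ℝ (Fin d) → EuclideanSpace ℝ (Fin d))
    (x : ℕ → EuclideanSpace ℝ (Fin d)) (ℓ : ℕ → ℝ) (η : ℕ → ℝ)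
    (hgrad : ∀ t y, HasGradientAt (f t) (G t y) y)
    (hsmooth : ∀ t u v, ‖G t u - G t v‖ ≤ L * ‖u - v‖)
    (hℓ : ∀ t y, ℓ t ≤ f t y)
    (hGne : ∀ t, G t (x t) ≠ 0)
    (hη0 : η 0 = (f 0 (x 0) - ℓ 0) /
      (c_p * ‖G 0 (x 0)‖ ^ 2 * Real.sqrt (f 0 (x 0) - ℓ 0)))
    (hη : ∀ t, η (t + 1) = min
      ((f (t + 1) (x (t + 1)) - ℓ (t + 1)) /
        (c_p * ‖G (t + 1) (x (t + 1))‖ ^ 2 *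
          Real.sqrt (∑ s ∈ range (t + 2), (f s (x s) - ℓ s))))
      (η t))
    (hstep : ∀ t, ‖x (t + 1) - xstar‖ ≤ ‖x t - η t • G t (x t) - xstar‖)
    (hbound : ∀ t, ‖x t - xstar‖ ≤ D) :
    ∀ T : ℕ, 1 ≤ T →
      (∑ t ∈ range T, ⟪G t (x t), x t - xstar⟫) ≤
        (2 * c_p * L * D ^ 2 + 1 / c_p) *
          Real.sqrt (∑ t ∈ range T, (f t (x t) - ℓ t)) := by
  intro _ hT
  obtain ⟨T, rfl⟩ := Nat.exists_eq_add_of_le' hT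
  set Δ : ℕ → ℝ := fun t => f t (x t) - ℓ t
  set g : ℕ → ℝ := fun t => ‖G t (x t)‖ ^ 2
  have hada : IsAdaSPS c_p Δ g η := ⟨hη0, hη⟩
  have hg : ∀ t, 0 < g t := fun t => pow_pos (norm_pos_iff.2 (hGne t)) 2
  have hgΔ : ∀ t, g t ≤ 4 * L * Δ t := fun t =>
    sq_norm_le_of_lipschitz_gradient hL (hgrad t) (hsmooth t) (hℓ t) (x t)
  have hΔ : ∀ t, 0 < Δ t := fun t => pos_of_mul_pos_right ((hg t).trans_le (hgΔ t)) (by positivity)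
  have hηpos := hada.pos hcp hL hΔ hg hgΔ
  calc ∑ t ∈ range (T + 1), ⟪G t (x t), x t - xstar⟫
      ≤ ∑ t ∈ range (T + 1), ((‖x t - xstar‖ ^ 2 - ‖x (t + 1) - xstar‖ ^ 2) / (2 * η t)
          + η t * g t / 2) := sum_le_sum fun t _ => inner_le_of_norm_le_norm_sub_smul (hηpos t)
            (sub_right_comm (x t) (η t • G t (x t)) xstar ▸ hstep t)
    _ ≤ 2 * c_p * L * D ^ 2 * √(∑ t ∈ range (T + 1), Δ t)
          + 2 * √(∑ t ∈ range (T + 1), Δ t) / c_p / 2 := by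
        rw [sum_add_distrib, ← sum_div]
        gcongr
        · refine (sum_range_sub_div_le_of_antitone (fun t => sq_nonneg _)
            (fun t => pow_le_pow_left₀ (norm_nonneg _) (hbound t) 2)
            (fun t => by linarith [hηpos t]) (fun s t hst => by linarith [hada.antitone hst])
            T).trans ?_
          exact hada.sq_div_two_mul_le hcp hL hΔ hg hgΔ D T
        · exact hada.sum_mul_le hcp hΔ hg (T + 1)
    _ = (2 * c_p * L * D ^ 2 + 1 / c_p) * √(∑ t ∈ range (T + 1), Δ t) := by ring

/-- AdaSPS key inequality (projected SGD, bounded iterates): under `L`-smoothness of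
each `f t`, lower bounds `ℓ t ≤ f t`, nonzero gradients at the iterates, AdaSPS
stepsizes `η`, nonexpansive steps `‖x_{t+1} − x*‖ ≤ ‖x_t − η_t ∇f_t(x_t) − x*‖`, and
`‖x_t − x*‖ ≤ D`, one has for every `T ≥ 1`:
`Σ_{t<T} ⟨∇f_t(x_t), x_t − x*⟩ ≤ (2 c_p L D² + 1/c_p)·√(Σ_{t<T} (f_t(x_t) − ℓ_t))`. -/
theorem stmt_10 {d : ℕ} (L c_p D : ℝ) (hL : 0 < L) (hcp : 0 < c_p) (hD : 0 ≤ D)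
    (xstar : EuclideanSpace ℝ (Fin d))
    (f : ℕ → EuclideanSpace ℝ (Fin d) → ℝ)
    (G : ℕ → EuclideanSpace ℝ (Fin d) → EuclideanSpace ℝ (Fin d))
    (x : ℕ → EuclideanSpace ℝ (Fin d)) (ℓ : ℕ → ℝ) (η : ℕ → ℝ)
    (hgrad : ∀ t y, HasGradientAt (f t) (G t y) y)
    (hsmooth : ∀ t u v, ‖G t u - G t v‖ ≤ L * ‖u - v‖)
    (hℓ : ∀ t y, ℓ t ≤ f t y)
    (hGne : ∀ t, G t (x t) ≠ 0)
    (hη0 : η 0 = (f 0 (x 0) - ℓ 0) /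
      (c_p * ‖G 0 (x 0)‖ ^ 2 * Real.sqrt (f 0 (x 0) - ℓ 0)))
    (hη : ∀ t, η (t + 1) = min
      ((f (t + 1) (x (t + 1)) - ℓ (t + 1)) /
        (c_p * ‖G (t + 1) (x (t + 1))‖ ^ 2 *
          Real.sqrt (∑ s ∈ range (t + 2), (f s (x s) - ℓ s))))
      (η t))
    (hstep : ∀ t, ‖x (t + 1) - xstar‖ ≤ ‖x t - η t • G t (x t) - xstar‖)
    (hbound : ∀ t, ‖x t - xstar‖ ≤ D) :
    ∀ T : ℕ, 1 ≤ T →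
      (∑ t ∈ range T, ⟪G t (x t), x t - xstar⟫) ≤
        (2 * c_p * L * D ^ 2 + 1 / c_p) *
          Real.sqrt (∑ t ∈ range T, (f t (x t) - ℓ t)) :=
  stmt_10_general L c_p D hL hcp xstar f G x ℓ η hgrad hsmooth hℓ hGne hη0 hη hstep hbound
end

section
/- Let L > 0, c_l > 0, D ≥ 0, ρ ∈ (0,1), γ_max > 0 and x* ∈ E. For each t ∈ ℕ let f_t : E → ℝ be differentiable, L-smooth and bounded below with infimum f_t*, let x_t ∈ E be points with ∇f_t(x_t) ≠ 0, and let γ_t be scales satisfying the Armijo condition for f_t at x_t with parameter ρ together with min{(1 − ρ)/L, γ_max} ≤ γ_t ≤ γ_max. Let (η_t) be the AdaSLS stepsizes, and assume that for all t: ‖x_{t+1} − x*‖ ≤ ‖x_t − η_t∇f_t(x_t) − x*‖ and ‖x_t − x*‖ ≤ D. Then for every T ≥ 1: Σ_{t=0}^{T−1} ⟨∇f_t(x_t), x_t − x*⟩ ≤ ( max{ L/((1 − ρ)√ρ), 1/(γ_max·√ρ) }·c_l·D² + 1/(c_l·√ρ) )·√(Σ_{t=0}^{T−1} (f_t(x_t)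 − f_t*)). -/
open Finset RealInnerProductSpace

private lemma adagrad_aux (a : ℕ → ℝ) (ha : ∀ t, 0 < a t) :
    ∀ T : ℕ, ∑ t ∈ range T, a t / Real.sqrt (∑ s ∈ range (t+1), a s)
      ≤ 2 * Real.sqrt (∑ t ∈ range T, a t) := by
  intro T
  induction T with
  | zero => simp
  | succ T ih =>
    rw [sum_range_succ]
    have hS : (0:ℝ) ≤ ∑ s ∈ range T, a s := sum_nonneg fun i _ => (ha i).le
    have hS' : (0:ℝ) < ∑ s ∈ range (T+1), a s := sum_pos (fun i _ => ha i) (by simp)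
    have hSS' : (∑ s ∈ range (T+1), a s) = (∑ s ∈ range T, a s) + a T := sum_range_succ a T
    have h1 : Real.sqrt (∑ s ∈ range T, a s) ^ 2 = ∑ s ∈ range T, a s := Real.sq_sqrt hS
    have h2 : Real.sqrt (∑ s ∈ range (T+1), a s) ^ 2 = ∑ s ∈ range (T+1), a s :=
      Real.sq_sqrt hS'.le
    have h3 : 0 < Real.sqrt (∑ s ∈ range (T+1), a s) := Real.sqrt_pos.2 hS'
    have h4 : 0 ≤ Real.sqrt (∑ s ∈ range T, a s) := Real.sqrt_nonneg _
    have key : a T / Real.sqrt (∑ s ∈ range (T+1), a s)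
        ≤ 2 * Real.sqrt (∑ s ∈ range (T+1), a s) - 2 * Real.sqrt (∑ s ∈ range T, a s) := by
      rw [div_le_iff₀ h3]
      nlinarith [sq_nonneg (Real.sqrt (∑ s ∈ range (T+1), a s) - Real.sqrt (∑ s ∈ range T, a s))]
    linarith

private lemma telescope_aux (w Dq : ℕ → ℝ) (D : ℝ)
    (hw : ∀ t, w t ≤ w (t+1)) (hw0 : ∀ t, 0 ≤ w t)
    (hD : ∀ t, Dq t ≤ D^2) :
    ∀ T : ℕ, ∑ t ∈ range (T+1), w t * (Dq t - Dq (t+1)) ≤ w T * (D^2 - Dq (T+1)) := by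
  intro T
  induction T with
  | zero =>
    rw [show (0:ℕ)+1 = 1 from rfl, sum_range_one]
    nlinarith [hD 0, hw0 0]
  | succ T ih =>
    rw [sum_range_succ]
    nlinarith [hw T, hD (T+1), hw0 T, hw0 (T+1)]

private lemma alg1 (c g s D2 : ℝ) (hc : c ≠ 0) (hg : g ≠ 0) :
    (c * D2 / (2 * g) + 1/c) * s = D2 * c * s / (2 * g) + s / c := by
  field_simp

private lemma alg2 (c g q r D2 : ℝ) (hc : c ≠ 0) (hg : g ≠ 0) (hq : q ≠ 0) :
    (c * D2 / (2 * g) + 1/c) * (r / q) = (c * D2 * (1/(g*q))/2 + 1/(c*q)) * r := by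
  field_simp

/-- AdaSLS key inequality (projected SGD, bounded iterates): under `L`-smoothness of
each `f t` (bounded below with infimum `fstar t`), Armijo scales
`min{(1−ρ)/L, γ_max} ≤ γ_t ≤ γ_max`, AdaSLS stepsizes `η`, nonexpansive steps and
`‖x_t − x*‖ ≤ D`, one has for every `T ≥ 1`:
`Σ_{t<T} ⟨∇f_t(x_t), x_t − x*⟩ ≤
 (max{L/((1−ρ)√ρ), 1/(γ_max √ρ)}·c_l·D² + 1/(c_l √ρ))·√(Σ_{t<T} (f_t(x_t) − f_t*))`. -/
theorem stmt_11 {d : ℕ} (L c_l D ρ γmax : ℝ) (hL : 0 < L) (hcl : 0 < c_l) (hD : 0 ≤ D)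
    (hρ : ρ ∈ Set.Ioo (0 : ℝ) 1) (hγmax : 0 < γmax)
    (xstar : EuclideanSpace ℝ (Fin d))
    (f : ℕ → EuclideanSpace ℝ (Fin d) → ℝ)
    (G : ℕ → EuclideanSpace ℝ (Fin d) → EuclideanSpace ℝ (Fin d))
    (x : ℕ → EuclideanSpace ℝ (Fin d)) (fstar : ℕ → ℝ) (γ η : ℕ → ℝ)
    (hgrad : ∀ t y, HasGradientAt (f t) (G t y) y)
    (hsmooth : ∀ t u v, ‖G t u - G t v‖ ≤ L * ‖u - v‖)
    (hfstar : ∀ t, IsGLB (Set.range (f t)) (fstar t))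
    (hGne : ∀ t, G t (x t) ≠ 0)
    (hArmijo : ∀ t, f t (x t - γ t • G t (x t)) ≤ f t (x t) - ρ * γ t * ‖G t (x t)‖ ^ 2)
    (hγlow : ∀ t, min ((1 - ρ) / L) γmax ≤ γ t)
    (hγhigh : ∀ t, γ t ≤ γmax)
    (hη0 : η 0 = γ 0 / (c_l * Real.sqrt (γ 0 * ‖G 0 (x 0)‖ ^ 2)))
    (hη : ∀ t, η (t + 1) = min
      (γ (t + 1) /
        (c_l * Real.sqrt (∑ s ∈ range (t + 2), γ s * ‖G s (x s)‖ ^ 2)))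
      (η t))
    (hstep : ∀ t, ‖x (t + 1) - xstar‖ ≤ ‖x t - η t • G t (x t) - xstar‖)
    (hbound : ∀ t, ‖x t - xstar‖ ≤ D) :
    ∀ T : ℕ, 1 ≤ T →
      (∑ t ∈ range T, ⟪G t (x t), x t - xstar⟫) ≤
        (max (L / ((1 - ρ) * Real.sqrt ρ)) (1 / (γmax * Real.sqrt ρ)) * c_l * D ^ 2 +
            1 / (c_l * Real.sqrt ρ)) *
          Real.sqrt (∑ t ∈ range T, (f t (x t) - fstar t)) := by
  intro T hT
  obtain ⟨T', rfl⟩ : ∃ T', T = T' + 1 := ⟨T - 1, (Nat.succ_pred_eq_of_pos hT).symm⟩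
  set a : ℕ → ℝ := fun t => γ t * ‖G t (x t)‖ ^ 2 with ha_def
  have hae : ∀ t, a t = γ t * ‖G t (x t)‖ ^ 2 := fun t => rfl
  have hγmin : 0 < min ((1 - ρ) / L) γmax :=
    lt_min (div_pos (by linarith [hρ.2]) hL) hγmax
  have hγpos : ∀ t, 0 < γ t := fun t => lt_of_lt_of_le hγmin (hγlow t)
  have hgpos : ∀ t, 0 < ‖G t (x t)‖ ^ 2 := fun t => pow_pos (norm_pos_iff.2 (hGne t)) 2
  have ha : ∀ t, 0 < a t := fun t => mul_pos (hγpos t) (hgpos t)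
  have hSnn : ∀ n, (0:ℝ) ≤ ∑ s ∈ range n, a s := fun n => sum_nonneg fun i _ => (ha i).le
  have hSpos : ∀ n, (0:ℝ) < ∑ s ∈ range (n+1), a s := fun n =>
    sum_pos (fun i _ => ha i) (by simp)
  have hSmono : ∀ m n, m ≤ n → (∑ s ∈ range m, a s) ≤ ∑ s ∈ range n, a s := fun m n h =>
    sum_le_sum_of_subset_of_nonneg (range_subset_range.2 h) (fun i _ _ => (ha i).le)
  have hsqρ : 0 < Real.sqrt ρ := Real.sqrt_pos.2 hρ.1
  -- η upper bound
  have hηle : ∀ t, η t ≤ γ t / (c_l * Real.sqrt (∑ s ∈ range (t+1), a s)) := by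
    intro t
    match t with
    | 0 => rw [hη0]; simp [hae]
    | t+1 => rw [hη t]; exact min_le_left _ _
  -- η positive
  have hηpos : ∀ t, 0 < η t := by
    intro t
    induction t with
    | zero =>
      rw [hη0]
      exact div_pos (hγpos 0) (mul_pos hcl (Real.sqrt_pos.2 (ha 0)))
    | succ t ih =>
      rw [hη t]
      exact lt_min (div_pos (hγpos _) (mul_pos hcl (Real.sqrt_pos.2 (hSpos (t+1))))) ih
  have hηmono : ∀ t, η (t+1) ≤ η t := fun t => by rw [hη t]; exact min_le_right _ _
  -- η lower bound among first T'+1 steps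
  have hηlow : ∀ t, t < T' + 1 →
      min ((1-ρ)/L) γmax / (c_l * Real.sqrt (∑ s ∈ range (T'+1), a s)) ≤ η t := by
    have hcand : ∀ t, t < T' + 1 →
        min ((1-ρ)/L) γmax / (c_l * Real.sqrt (∑ s ∈ range (T'+1), a s))
          ≤ γ t / (c_l * Real.sqrt (∑ s ∈ range (t+1), a s)) := by
      intro t ht
      apply div_le_div₀ (hγpos t).le (hγlow t)
        (mul_pos hcl (Real.sqrt_pos.2 (hSpos t)))
      exact mul_le_mul_of_nonneg_left (Real.sqrt_le_sqrt (hSmono _ _ ht)) hcl.le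
    intro t
    induction t with
    | zero =>
      intro h0
      have h := hcand 0 h0
      rw [hη0]
      simpa [hae] using h
    | succ t ih =>
      intro h
      rw [hη t]
      exact le_min (hcand (t+1) h) (ih (Nat.lt_of_succ_lt h))
  -- per-step inequality
  have key : ∀ t, ⟪G t (x t), x t - xstar⟫ ≤
      (‖x t - xstar‖^2 - ‖x (t+1) - xstar‖^2) / (2 * η t) + η t * ‖G t (x t)‖^2 / 2 := by
    intro t
    have hηt := hηpos t
    have h1 : ‖x (t+1) - xstar‖^2 ≤ ‖(x t - xstar) - η t • G t (x t)‖^2 := by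
      have h := hstep t
      rw [sub_right_comm] at h
      exact pow_le_pow_left₀ (norm_nonneg _) h 2
    have h2 : ‖(x t - xstar) - η t • G t (x t)‖^2
        = ‖x t - xstar‖^2 - 2 * (η t * ⟪G t (x t), x t - xstar⟫)
          + (η t)^2 * ‖G t (x t)‖^2 := by
      rw [norm_sub_sq_real, real_inner_smul_right, norm_smul, Real.norm_eq_abs, mul_pow,
        sq_abs, real_inner_comm]
    rw [h2] at h1
    have e2 : (‖x t - xstar‖^2 - ‖x (t+1) - xstar‖^2)/(2*η t) + η t * ‖G t (x t)‖^2/2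
        - ⟪G t (x t), x t - xstar⟫
        = ((‖x t - xstar‖^2 - ‖x (t+1) - xstar‖^2) + (η t)^2 * ‖G t (x t)‖^2
          - 2 * (η t * ⟪G t (x t), x t - xstar⟫)) / (2 * η t) := by
      field_simp
    have h4 : 0 ≤ ((‖x t - xstar‖^2 - ‖x (t+1) - xstar‖^2) + (η t)^2 * ‖G t (x t)‖^2
          - 2 * (η t * ⟪G t (x t), x t - xstar⟫)) / (2 * η t) :=
      div_nonneg (by linarith) (by linarith)
    linarith [e2, h4]
  -- sum the per-step inequalities
  have sum1 : (∑ t ∈ range (T'+1), ⟪G t (x t), x t - xstar⟫) ≤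
      (∑ t ∈ range (T'+1), (‖x t - xstar‖^2 - ‖x (t+1) - xstar‖^2) / (2 * η t))
      + ∑ t ∈ range (T'+1), η t * ‖G t (x t)‖^2 / 2 := by
    rw [← sum_add_distrib]
    exact sum_le_sum fun t _ => key t
  -- telescoping bound for the first sum
  have sumA : (∑ t ∈ range (T'+1), (‖x t - xstar‖^2 - ‖x (t+1) - xstar‖^2) / (2 * η t))
      ≤ D^2 / (2 * η T') := by
    have tele := telescope_aux (fun t => 1/(2 * η t)) (fun t => ‖x t - xstar‖^2) D
      (fun t => one_div_le_one_div_of_le (by linarith [hηpos (t+1)]) (by linarith [hηmono t]))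
      (fun t => by have := hηpos t; positivity)
      (fun t => pow_le_pow_left₀ (norm_nonneg _) (hbound t) 2)
      T'
    calc (∑ t ∈ range (T'+1), (‖x t - xstar‖^2 - ‖x (t+1) - xstar‖^2) / (2 * η t))
        = ∑ t ∈ range (T'+1), (1/(2*η t)) * (‖x t - xstar‖^2 - ‖x (t+1) - xstar‖^2) := by
          refine sum_congr rfl fun t _ => ?_
          rw [one_div_mul_eq_div]
      _ ≤ (1/(2*η T')) * (D^2 - ‖x (T'+1) - xstar‖^2) := tele
      _ ≤ (1/(2*η T')) * D^2 := by
          have h0 : (0:ℝ) ≤ 1/(2*η T') := by have := hηpos T'; positivity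
          nlinarith [sq_nonneg ‖x (T'+1) - xstar‖, mul_nonneg h0 (sq_nonneg ‖x (T'+1) - xstar‖)]
      _ = D^2 / (2 * η T') := one_div_mul_eq_div _ _
  -- lower-bound η T'
  have hsqS : 0 < Real.sqrt (∑ s ∈ range (T'+1), a s) := Real.sqrt_pos.2 (hSpos T')
  have hlow := hηlow T' (Nat.lt_succ_self T')
  have hlow' : min ((1-ρ)/L) γmax ≤ η T' * (c_l * Real.sqrt (∑ s ∈ range (T'+1), a s)) :=
    (div_le_iff₀ (mul_pos hcl hsqS)).1 hlow
  have sumA2 : D^2 / (2 * η T')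
      ≤ D^2 * c_l * Real.sqrt (∑ s ∈ range (T'+1), a s) / (2 * min ((1-ρ)/L) γmax) := by
    rw [div_le_div_iff₀ (by linarith [hηpos T']) (by linarith)]
    nlinarith [mul_le_mul_of_nonneg_left hlow' (sq_nonneg D)]
  -- second sum via AdaGrad lemma
  have sumB : (∑ t ∈ range (T'+1), η t * ‖G t (x t)‖^2 / 2)
      ≤ Real.sqrt (∑ s ∈ range (T'+1), a s) / c_l := by
    have h1 : ∀ t, η t * ‖G t (x t)‖^2 / 2
        ≤ a t / Real.sqrt (∑ s ∈ range (t+1), a s) / (2 * c_l) := by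
      intro t
      have hst : 0 < Real.sqrt (∑ s ∈ range (t+1), a s) := Real.sqrt_pos.2 (hSpos t)
      have hmul : η t * ‖G t (x t)‖^2
          ≤ γ t / (c_l * Real.sqrt (∑ s ∈ range (t+1), a s)) * ‖G t (x t)‖^2 :=
        mul_le_mul_of_nonneg_right (hηle t) (hgpos t).le
      have e : γ t / (c_l * Real.sqrt (∑ s ∈ range (t+1), a s)) * ‖G t (x t)‖^2 / 2
          = a t / Real.sqrt (∑ s ∈ range (t+1), a s) / (2 * c_l) := by
        rw [hae]
        have hc0 : c_l ≠ 0 := hcl.ne'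
        have hs0 : Real.sqrt (∑ s ∈ range (t+1), a s) ≠ 0 := hst.ne'
        field_simp
      linarith [hmul, e]
    calc (∑ t ∈ range (T'+1), η t * ‖G t (x t)‖^2 / 2)
        ≤ ∑ t ∈ range (T'+1), a t / Real.sqrt (∑ s ∈ range (t+1), a s) / (2*c_l) :=
          sum_le_sum fun t _ => h1 t
      _ = (∑ t ∈ range (T'+1), a t / Real.sqrt (∑ s ∈ range (t+1), a s)) / (2*c_l) :=
          (sum_div _ _ _).symm
      _ ≤ 2 * Real.sqrt (∑ s ∈ range (T'+1), a s) / (2*c_l) := by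
          gcongr
          exact adagrad_aux a ha (T'+1)
      _ = Real.sqrt (∑ s ∈ range (T'+1), a s) / c_l := by
          field_simp
  -- relate S to function gaps via Armijo
  have hΔ : ∀ t, ρ * a t ≤ f t (x t) - fstar t := by
    intro t
    have h1 := hArmijo t
    have h2 : fstar t ≤ f t (x t - γ t • G t (x t)) := (hfstar t).1 ⟨_, rfl⟩
    rw [hae]
    nlinarith
  have hΔnn : (0:ℝ) ≤ ∑ t ∈ range (T'+1), (f t (x t) - fstar t) := by
    refine sum_nonneg fun t _ => ?_
    have h2 : fstar t ≤ f t (x t) := (hfstar t).1 ⟨_, rfl⟩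
    linarith
  have hSleΔ : (∑ s ∈ range (T'+1), a s)
      ≤ (∑ t ∈ range (T'+1), (f t (x t) - fstar t)) / ρ := by
    rw [le_div_iff₀ hρ.1]
    calc (∑ s ∈ range (T'+1), a s) * ρ = ∑ s ∈ range (T'+1), ρ * a s := by
          rw [sum_mul]; exact sum_congr rfl fun t _ => mul_comm _ _
      _ ≤ ∑ t ∈ range (T'+1), (f t (x t) - fstar t) := sum_le_sum fun t _ => hΔ t
  have hsq : Real.sqrt (∑ s ∈ range (T'+1), a s)
      ≤ Real.sqrt (∑ t ∈ range (T'+1), (f t (x t) - fstar t)) / Real.sqrt ρ := by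
    calc Real.sqrt (∑ s ∈ range (T'+1), a s)
        ≤ Real.sqrt ((∑ t ∈ range (T'+1), (f t (x t) - fstar t)) / ρ) :=
          Real.sqrt_le_sqrt hSleΔ
      _ = Real.sqrt (∑ t ∈ range (T'+1), (f t (x t) - fstar t)) / Real.sqrt ρ :=
          Real.sqrt_div hΔnn ρ
  -- the max coefficient dominates 1/(γmin √ρ)
  have hM : 1/(min ((1-ρ)/L) γmax * Real.sqrt ρ)
      ≤ max (L / ((1 - ρ) * Real.sqrt ρ)) (1 / (γmax * Real.sqrt ρ)) := by
    rcases le_total ((1-ρ)/L) γmax with h | h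
    · rw [min_eq_left h]
      refine le_trans (le_of_eq ?_) (le_max_left _ _)
      rw [show (1-ρ)/L * Real.sqrt ρ = ((1-ρ) * Real.sqrt ρ)/L by ring, one_div_div]
    · rw [min_eq_right h]
      exact le_max_right _ _
  -- put it all together
  have total : (∑ t ∈ range (T'+1), ⟪G t (x t), x t - xstar⟫)
      ≤ (c_l * D^2 / (2 * min ((1-ρ)/L) γmax) + 1/c_l)
        * Real.sqrt (∑ s ∈ range (T'+1), a s) := by
    have e : (c_l * D^2 / (2 * min ((1-ρ)/L) γmax) + 1/c_l)
        * Real.sqrt (∑ s ∈ range (T'+1), a s)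
        = D^2 * c_l * Real.sqrt (∑ s ∈ range (T'+1), a s) / (2 * min ((1-ρ)/L) γmax)
          + Real.sqrt (∑ s ∈ range (T'+1), a s) / c_l :=
      alg1 c_l _ _ _ hcl.ne' hγmin.ne'
    rw [e]
    linarith [sum1, sumA, sumA2, sumB]
  have hCnn : (0:ℝ) ≤ c_l * D^2 / (2 * min ((1-ρ)/L) γmax) + 1/c_l := by positivity
  have step2 : (∑ t ∈ range (T'+1), ⟪G t (x t), x t - xstar⟫)
      ≤ (c_l * D^2 / (2 * min ((1-ρ)/L) γmax) + 1/c_l)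
        * (Real.sqrt (∑ t ∈ range (T'+1), (f t (x t) - fstar t)) / Real.sqrt ρ) :=
    le_trans total (mul_le_mul_of_nonneg_left hsq hCnn)
  refine le_trans step2 ?_
  rw [alg2 c_l (min ((1-ρ)/L) γmax) (Real.sqrt ρ)
      (Real.sqrt (∑ t ∈ range (T'+1), (f t (x t) - fstar t))) (D^2)
      hcl.ne' hγmin.ne' hsqρ.ne']
  refine mul_le_mul_of_nonneg_right ?_ (Real.sqrt_nonneg _)
  have h0 : (0:ℝ) ≤ c_l * D^2 := by positivity
  have h1 := mul_le_mul_of_nonneg_left hM h0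
  have h2 : (0:ℝ) ≤ c_l * D^2 * (1/(min ((1-ρ)/L) γmax * Real.sqrt ρ)) := by positivity
  have h3 : max (L / ((1 - ρ) * Real.sqrt ρ)) (1 / (γmax * Real.sqrt ρ)) * c_l * D ^ 2
      = c_l * D^2 * max (L / ((1 - ρ) * Real.sqrt ρ)) (1 / (γmax * Real.sqrt ρ)) := by ring
  linarith [h1, h2]
end

section
/- Let L > 0, c_l > 0, ρ ∈ (0,1) and γ_max > 0. For each t ∈ ℕ let f_t : E → ℝ be convex, differentiable and L-smooth, and suppose there is a common minimizer x* ∈ E with f_t(x*) ≤ f_t(y) for all y ∈ E and all t (interpolation). Starting from x_0 ∈ E, define SGD iterates x_{t+1} = x_t − η_t∇f_t(x_t), where (η_t) are the AdaSLS stepsizes built from scales γ_t that satisfy the Armijo condition for f_t at x_t with parameter ρ and min{(1 − ρ)/L, γ_max} ≤ γ_t ≤ γ_max, and assume ∇f_t(x_t) ≠ 0 for all t. If c_l·ρ·√(γ_0‖∇f_0(x_0)‖²) ≥ 1, then for every T ≥ 1: Σ_{t=1}^{T} (f_t(x_t) − f_t(x*)) ≤ c_l²·‖x_0 − x*‖⁴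 / (ρ·min{(1 − ρ)/L, γ_max}²). -/
open Finset RealInnerProductSpace

set_option maxHeartbeats 1000000 in
/-- AdaSLS under interpolation: with convex, `L`-smooth `f t` sharing a common
minimizer `x*`, SGD iterates with AdaSLS stepsizes built from Armijo scales
`min{(1−ρ)/L, γ_max} ≤ γ_t ≤ γ_max`, nonzero gradients at the iterates, and
`c_l·ρ·√(γ_0 ‖∇f_0(x_0)‖²) ≥ 1`, one has for every `T ≥ 1`:
`Σ_{t=1}^{T} (f_t(x_t) − f_t(x*)) ≤ c_l² ‖x_0 − x*‖⁴ / (ρ·min{(1−ρ)/L, γ_max}²)`. -/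
theorem stmt_13 {d : ℕ} (L c_l ρ γmax : ℝ) (hL : 0 < L) (hcl : 0 < c_l)
    (hρ : ρ ∈ Set.Ioo (0 : ℝ) 1) (hγmax : 0 < γmax)
    (xstar : EuclideanSpace ℝ (Fin d))
    (f : ℕ → EuclideanSpace ℝ (Fin d) → ℝ)
    (G : ℕ → EuclideanSpace ℝ (Fin d) → EuclideanSpace ℝ (Fin d))
    (x : ℕ → EuclideanSpace ℝ (Fin d)) (γ η : ℕ → ℝ)
    (hgrad : ∀ t y, HasGradientAt (f t) (G t y) y)
    (hconv : ∀ t u v, f t v ≥ f t u + ⟪G t u, v - u⟫)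
    (hsmooth : ∀ t u v, ‖G t u - G t v‖ ≤ L * ‖u - v‖)
    (hmin : ∀ t y, f t xstar ≤ f t y)
    (hGne : ∀ t, G t (x t) ≠ 0)
    (hArmijo : ∀ t, f t (x t - γ t • G t (x t)) ≤ f t (x t) - ρ * γ t * ‖G t (x t)‖ ^ 2)
    (hγlow : ∀ t, min ((1 - ρ) / L) γmax ≤ γ t)
    (hγhigh : ∀ t, γ t ≤ γmax)
    (hη0 : η 0 = γ 0 / (c_l * Real.sqrt (γ 0 * ‖G 0 (x 0)‖ ^ 2)))
    (hη : ∀ t, η (t + 1) = min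
      (γ (t + 1) /
        (c_l * Real.sqrt (∑ s ∈ range (t + 2), γ s * ‖G s (x s)‖ ^ 2)))
      (η t))
    (hx : ∀ t, x (t + 1) = x t - η t • G t (x t))
    (hscale : 1 ≤ c_l * ρ * Real.sqrt (γ 0 * ‖G 0 (x 0)‖ ^ 2)) :
    ∀ T : ℕ, 1 ≤ T →
      (∑ t ∈ Finset.Icc 1 T, (f t (x t) - f t xstar)) ≤
        c_l ^ 2 * ‖x 0 - xstar‖ ^ 4 / (ρ * (min ((1 - ρ) / L) γmax) ^ 2) := by
  intro T hT
  obtain ⟨hρ0, hρ1⟩ := hρ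
  set γmin : ℝ := min ((1 - ρ) / L) γmax with hγmin_def
  have hγminpos : 0 < γmin := lt_min (div_pos (by linarith) hL) hγmax
  have hγpos : ∀ t, 0 < γ t := fun t => lt_of_lt_of_le hγminpos (hγlow t)
  set g : ℕ → ℝ := fun t => ‖G t (x t)‖ ^ 2 with hg_def
  have hgpos : ∀ t, 0 < g t := fun t =>
    pow_pos (norm_pos_iff.mpr (hGne t)) 2
  set Γ : ℕ → ℝ := fun t => ∑ s ∈ range (t + 1), γ s * g s with hΓ_def
  have hΓpos : ∀ t, 0 < Γ t := fun t =>
    Finset.sum_pos (fun s _ => mul_pos (hγpos s) (hgpos s)) ⟨0, by simp⟩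
  have hΓsucc : ∀ t, Γ (t + 1) = Γ t + γ (t + 1) * g (t + 1) := fun t => by
    simp [hΓ_def, Finset.sum_range_succ]
  have hΓmono : Monotone Γ := monotone_nat_of_le_succ (fun t => by
    rw [hΓsucc t]
    have := mul_pos (hγpos (t + 1)) (hgpos (t + 1))
    linarith)
  have hΓ0 : Γ 0 = γ 0 * g 0 := by simp [hΓ_def]
  set Δ : ℕ → ℝ := fun t => f t (x t) - f t xstar with hΔ_def
  have hΔlb : ∀ t, ρ * (γ t * g t) ≤ Δ t := fun t => by
    have h1 := hArmijo t
    have h2 := hmin t (x t - γ t • G t (x t))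
    simp only [hΔ_def, hg_def]
    nlinarith
  have hΔnn : ∀ t, 0 ≤ Δ t := fun t => by
    have := hΔlb t
    nlinarith [mul_pos (hγpos t) (hgpos t)]
  have hsqrtpos : ∀ t, 0 < c_l * Real.sqrt (Γ t) := fun t =>
    mul_pos hcl (Real.sqrt_pos.mpr (hΓpos t))
  have hclΓ : ∀ t, 1 ≤ ρ * (c_l * Real.sqrt (Γ t)) := fun t => by
    have h0 : Real.sqrt (Γ 0) ≤ Real.sqrt (Γ t) :=
      Real.sqrt_le_sqrt (hΓmono (Nat.zero_le t))
    have : (1:ℝ) ≤ c_l * ρ * Real.sqrt (Γ 0) := by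
      rw [hΓ0]; exact hscale
    have h1 : c_l * ρ * Real.sqrt (Γ 0) ≤ c_l * ρ * Real.sqrt (Γ t) :=
      mul_le_mul_of_nonneg_left h0 (by positivity)
    nlinarith
  have hηle : ∀ t, η t ≤ γ t / (c_l * Real.sqrt (Γ t)) := fun t => by
    cases t with
    | zero => rw [hη0, ← hΓ0]
    | succ n =>
      have := hη n
      have hs : (∑ s ∈ range (n + 2), γ s * ‖G s (x s)‖ ^ 2) = Γ (n + 1) := rfl
      rw [this, hs]
      exact min_le_left _ _
  have hηlb : ∀ t, γmin / (c_l * Real.sqrt (Γ t)) ≤ η t := by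
    intro t
    induction t with
    | zero =>
      rw [hη0, ← hΓ0]
      gcongr
      exact hγlow 0
    | succ n ih =>
      rw [hη n]
      have hs : (∑ s ∈ range (n + 2), γ s * ‖G s (x s)‖ ^ 2) = Γ (n + 1) := rfl
      rw [hs]
      refine le_min ?_ ?_
      · gcongr; exact hγlow (n + 1)
      · refine le_trans ?_ ih
        have hd : c_l * Real.sqrt (Γ n) ≤ c_l * Real.sqrt (Γ (n + 1)) :=
          mul_le_mul_of_nonneg_left (Real.sqrt_le_sqrt (hΓmono (Nat.le_succ n))) hcl.le
        exact div_le_div_of_nonneg_left hγminpos.le (hsqrtpos n) hd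
  have hηpos : ∀ t, 0 < η t := fun t =>
    lt_of_lt_of_le (div_pos hγminpos (hsqrtpos t)) (hηlb t)
  have hηρ : ∀ t, η t ≤ ρ * γ t := fun t => by
    refine le_trans (hηle t) ?_
    rw [div_le_iff₀ (hsqrtpos t)]
    nlinarith [hclΓ t, hγpos t]
  have hηanti : Antitone η := antitone_nat_of_succ_le (fun t => by
    rw [hη t]; exact min_le_right _ _)
  -- distance recursion
  have hstep : ∀ t, ‖x (t + 1) - xstar‖ ^ 2 ≤ ‖x t - xstar‖ ^ 2 - η t * Δ t := by
    intro t
    have hxt : x (t + 1) - xstar = (x t - xstar) - η t • G t (x t) := by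
      rw [hx t]; abel
    have hexp : ‖x (t + 1) - xstar‖ ^ 2 =
        ‖x t - xstar‖ ^ 2 - 2 * (η t * ⟪G t (x t), x t - xstar⟫) +
          (η t) ^ 2 * g t := by
      rw [hxt, norm_sub_sq_real, real_inner_smul_right, norm_smul,
        real_inner_comm]
      simp only [hg_def, Real.norm_eq_abs, mul_pow, sq_abs]
    have hconv' : Δ t ≤ ⟪G t (x t), x t - xstar⟫ := by
      have := hconv t (x t) xstar
      have hneg : (⟪G t (x t), xstar - x t⟫ : ℝ) = -⟪G t (x t), x t - xstar⟫ := by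
        rw [show xstar - x t = -(x t - xstar) by abel, inner_neg_right]
      simp only [hΔ_def]
      rw [hneg] at this
      linarith
    have h1 : η t * Δ t ≤ η t * ⟪G t (x t), x t - xstar⟫ :=
      mul_le_mul_of_nonneg_left hconv' (le_of_lt (hηpos t))
    have h2 : (η t) ^ 2 * g t ≤ η t * Δ t := by
      have : η t * g t ≤ ρ * γ t * g t :=
        mul_le_mul_of_nonneg_right (hηρ t) (hgpos t).le
      nlinarith [hηpos t, hΔlb t]
    linarith [hexp]
  -- telescoping
  have htel : ∀ n, (∑ t ∈ range n, η t * Δ t) + ‖x n - xstar‖ ^ 2 ≤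
      ‖x 0 - xstar‖ ^ 2 := by
    intro n
    induction n with
    | zero => simp
    | succ m ih =>
      rw [Finset.sum_range_succ]
      have := hstep m
      linarith
  set S : ℝ := ∑ t ∈ range (T + 1), Δ t with hS_def
  set D2 : ℝ := ‖x 0 - xstar‖ ^ 2 with hD2_def
  have hD2nn : 0 ≤ D2 := by positivity
  have hweighted : η T * S ≤ D2 := by
    have h1 : η T * S = ∑ t ∈ range (T + 1), η T * Δ t := by
      rw [hS_def, Finset.mul_sum]
    have h2 : (∑ t ∈ range (T + 1), η T * Δ t) ≤ ∑ t ∈ range (T + 1), η t * Δ t :=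
      Finset.sum_le_sum (fun t ht => by
        have hle : η T ≤ η t := hηanti (Nat.lt_succ_iff.mp (Finset.mem_range.mp ht))
        exact mul_le_mul_of_nonneg_right hle (hΔnn t))
    have h3 := htel (T + 1)
    have h4 : 0 ≤ ‖x (T + 1) - xstar‖ ^ 2 := by positivity
    rw [h1]
    refine le_trans h2 ?_
    linarith
  have hΓS : ρ * Γ T ≤ S := by
    have : ρ * Γ T = ∑ s ∈ range (T + 1), ρ * (γ s * g s) := by
      show ρ * (∑ s ∈ range (T + 1), γ s * g s) = _
      rw [Finset.mul_sum]
    rw [this, hS_def]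
    exact Finset.sum_le_sum (fun s _ => hΔlb s)
  have hSpos : 0 < S := lt_of_lt_of_le (mul_pos hρ0 (hΓpos T)) hΓS
  -- key inequality: γmin * S ≤ c_l * √(S/ρ) * D2
  have hkey : γmin * S ≤ c_l * Real.sqrt (S / ρ) * D2 := by
    have h1 : γmin / (c_l * Real.sqrt (Γ T)) * S ≤ η T * S :=
      mul_le_mul_of_nonneg_right (hηlb T) (le_of_lt hSpos)
    have h2 : γmin / (c_l * Real.sqrt (Γ T)) * S ≤ D2 := le_trans h1 hweighted
    have h3 : γmin * S ≤ D2 * (c_l * Real.sqrt (Γ T)) := by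
      rw [div_mul_eq_mul_div, div_le_iff₀ (hsqrtpos T)] at h2
      linarith
    have h4 : Real.sqrt (Γ T) ≤ Real.sqrt (S / ρ) := by
      apply Real.sqrt_le_sqrt
      rw [le_div_iff₀ hρ0]
      linarith
    have h5 : D2 * (c_l * Real.sqrt (Γ T)) ≤ D2 * (c_l * Real.sqrt (S / ρ)) :=
      mul_le_mul_of_nonneg_left (mul_le_mul_of_nonneg_left h4 hcl.le) hD2nn
    nlinarith
  have hfin : S ≤ c_l ^ 2 * D2 ^ 2 / (ρ * γmin ^ 2) := by
    have hsq : (γmin * S) ^ 2 ≤ (c_l * Real.sqrt (S / ρ) * D2) ^ 2 :=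
      pow_le_pow_left₀ (by positivity) hkey 2
    have hsqrt2 : (Real.sqrt (S / ρ)) ^ 2 = S / ρ :=
      Real.sq_sqrt (by positivity)
    have hexp2 : (c_l * Real.sqrt (S / ρ) * D2) ^ 2 = c_l ^ 2 * (S / ρ) * D2 ^ 2 := by
      rw [mul_pow, mul_pow, hsqrt2]
    rw [hexp2] at hsq
    have hsq2 : γmin ^ 2 * S ^ 2 * ρ ≤ c_l ^ 2 * S * D2 ^ 2 := by
      have h := mul_le_mul_of_nonneg_right hsq hρ0.le
      calc γmin ^ 2 * S ^ 2 * ρ = (γmin * S) ^ 2 * ρ := by ring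
        _ ≤ c_l ^ 2 * (S / ρ) * D2 ^ 2 * ρ := h
        _ = c_l ^ 2 * S * D2 ^ 2 := by field_simp
    rw [le_div_iff₀ (by positivity)]
    have hsq3 : S * (ρ * γmin ^ 2) * S ≤ c_l ^ 2 * D2 ^ 2 * S := by
      calc S * (ρ * γmin ^ 2) * S = γmin ^ 2 * S ^ 2 * ρ := by ring
        _ ≤ c_l ^ 2 * S * D2 ^ 2 := hsq2
        _ = c_l ^ 2 * D2 ^ 2 * S := by ring
    exact le_of_mul_le_mul_right hsq3 hSpos
  have hsub : (∑ t ∈ Finset.Icc 1 T, Δ t) ≤ S := by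
    rw [hS_def]
    apply Finset.sum_le_sum_of_subset_of_nonneg
    · intro t ht
      simp only [Finset.mem_Icc] at ht
      simp only [Finset.mem_range]
      omega
    · intro t _ _
      exact hΔnn t
  have hD4 : D2 ^ 2 = ‖x 0 - xstar‖ ^ 4 := by rw [hD2_def]; ring
  calc (∑ t ∈ Finset.Icc 1 T, (f t (x t) - f t xstar)) = ∑ t ∈ Finset.Icc 1 T, Δ t := rfl
    _ ≤ S := hsub
    _ ≤ c_l ^ 2 * D2 ^ 2 / (ρ * γmin ^ 2) := hfin
    _ = c_l ^ 2 * ‖x 0 - xstar‖ ^ 4 / (ρ * (min ((1 - ρ) / L) γmax) ^ 2) := by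
        rw [hD4]
end

section
/- Let L > 0, c_l > 0, ρ ∈ (0,1) and γ_max > 0. For each t ∈ ℕ let f_t : E → ℝ be convex, differentiable and L-smooth, with a common minimizer x* ∈ E satisfying f_t(x*) ≤ f_t(y) for all y ∈ E and all t. Starting from x_0 ∈ E, define SGD iterates x_{t+1} = x_t − η_t∇f_t(x_t), where (η_t) are the AdaSLS stepsizes built from scales γ_t that satisfy the Armijo condition for f_t at x_t with parameter ρ and min{(1 − ρ)/L, γ_max} ≤ γ_t ≤ γ_max, and assume ∇f_t(x_t) ≠ 0 for all t. If c_l·ρ·√(γ_0‖∇f_0(x_0)‖²) ≥ 1, then for every t ∈ ℕ: (a) ‖x_{t+1} − x*‖² ≤ ‖x_t − x*‖² − η_t·⟨∇f_t(x_t), x_t − x*⟩; and (b) η_t ≥ ρ·min{(1 − ρ)/L, γ_max}² / (c_l²·‖x_0 − x*‖²). -/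
/-!
Write `g_t = ∇f_t(x_t)` and `S_t = Σ_{s ≤ t} γ_s ‖g_s‖²`. Convexity at `x_t` towards `x*`,
interpolation (`x*` minimizes `f_t`) and the Armijo condition give `ρ γ_t ‖g_t‖² ≤ ⟨g_t, x_t − x*⟩`.
Since `c_l ρ √S_0 ≥ 1`, `η_t ≤ ρ γ_t`, so the quadratic term of `‖x_{t+1} − x*‖²` is absorbed by
half of the linear one: this is (a). Summing (a) bounds `Σ_{s ≤ t} η_s ρ γ_s ‖g_s‖²` by
`‖x_0 − x*‖²`; as `η` is nonincreasing, this is at least `ρ η_t S_t`. Together with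
`η_t ≥ min{(1 − ρ)/L, γ_max} / (c_l √S_t)`, the minimum being taken over `γ_s / (c_l √S_s)` with
`S_s ≤ S_t`, eliminating `S_t` gives (b).
-/

open Finset RealInnerProductSpace

/-- `η t = min_{s ≤ t} γ s / D s`; AdaSLS is the case `D t = c_l √(Σ_{s ≤ t} γ_s ‖∇f_s(x_s)‖²)`. -/
def IsAdaSLSStepsize (γ D η : ℕ → ℝ) : Prop :=
  η 0 = γ 0 / D 0 ∧ ∀ t, η (t + 1) = min (γ (t + 1) / D (t + 1)) (η t)

namespace IsAdaSLSStepsize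

variable {γ D η : ℕ → ℝ}

theorem antitone (h : IsAdaSLSStepsize γ D η) : Antitone η :=
  antitone_nat_of_succ_le fun t => h.2 t ▸ min_le_right _ _

theorem le_div (h : IsAdaSLSStepsize γ D η) (t : ℕ) : η t ≤ γ t / D t := by
  cases t with
  | zero => exact h.1.le
  | succ t => exact h.2 t ▸ min_le_left _ _

theorem div_le (h : IsAdaSLSStepsize γ D η) (hD : Monotone D) (hDpos : ∀ t, 0 < D t)
    {m : ℝ} (hm : 0 ≤ m) (hmγ : ∀ t, m ≤ γ t) (t : ℕ) : m / D t ≤ η t := by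
  induction t with
  | zero => exact h.1 ▸ div_le_div_of_nonneg_right (hmγ 0) (hDpos 0).le
  | succ t ih =>
    rw [h.2 t]
    exact le_min (div_le_div_of_nonneg_right (hmγ _) (hDpos _).le)
      ((div_le_div_of_nonneg_left hm (hDpos t) (hD t.le_succ)).trans ih)

theorem nonneg (h : IsAdaSLSStepsize γ D η) (hD : Monotone D) (hDpos : ∀ t, 0 < D t)
    (hγ : ∀ t, 0 ≤ γ t) (t : ℕ) : 0 ≤ η t := by
  simpa using h.div_le hD hDpos le_rfl hγ t

theorem le_mul (h : IsAdaSLSStepsize γ D η) (hD : Monotone D) (hDpos : ∀ t, 0 < D t)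
    {ρ : ℝ} (hρD : 1 ≤ ρ * D 0) {t : ℕ} (hγ : 0 ≤ γ t) : η t ≤ ρ * γ t :=
  calc η t ≤ γ t / D t := h.le_div t
    _ ≤ γ t / D 0 := div_le_div_of_nonneg_left hγ (hDpos 0) (hD t.zero_le)
    _ ≤ ρ * γ t := by
      rw [div_le_iff₀ (hDpos 0)]
      nlinarith [mul_le_mul_of_nonneg_left hρD hγ]

end IsAdaSLSStepsize

theorem mul_sum_range_le_sum_mul_of_antitone {η a b : ℕ → ℝ} (hη : Antitone η)
    (hη_nonneg : ∀ s, 0 ≤ η s) (ha : ∀ s, 0 ≤ a s) (hab : ∀ s, a s ≤ b s) (t : ℕ) :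
    η t * ∑ s ∈ range (t + 1), a s ≤ ∑ s ∈ range (t + 1), η s * b s := by
  rw [mul_sum]
  refine sum_le_sum fun s hs => ?_
  calc η t * a s ≤ η s * a s :=
        mul_le_mul_of_nonneg_right (hη (Nat.lt_succ_iff.mp (mem_range.mp hs))) (ha s)
    _ ≤ η s * b s := mul_le_mul_of_nonneg_left (hab s) (hη_nonneg s)

theorem sum_range_le_of_le_sub {u b : ℕ → ℝ} (hu : ∀ t, 0 ≤ u t)
    (hub : ∀ t, u (t + 1) ≤ u t - b t) (n : ℕ) : ∑ t ∈ range n, b t ≤ u 0 :=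
  calc ∑ t ∈ range n, b t ≤ ∑ t ∈ range n, (u t - u (t + 1)) :=
        sum_le_sum fun t _ => by linarith [hub t]
    _ = u 0 - u n := sum_range_sub' u n
    _ ≤ u 0 := sub_le_self _ (hu n)

theorem div_le_of_mul_sum_le {m c S η ρ R : ℝ} (hm : 0 ≤ m) (hρ : 0 ≤ ρ) (hc : 0 < c)
    (hS : 0 < S) (hη : m / (c * √S) ≤ η) (hηS : ρ * η * S ≤ R) :
    ρ * m ^ 2 / (c ^ 2 * R) ≤ η := by
  have hη_nonneg : 0 ≤ η := (div_nonneg hm (by positivity)).trans hη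
  have hR : 0 ≤ R := (by positivity : 0 ≤ ρ * η * S).trans hηS
  have hm_sq : m ^ 2 ≤ η ^ 2 * c ^ 2 * S :=
    calc m ^ 2 ≤ (η * (c * √S)) ^ 2 :=
          pow_le_pow_left₀ hm ((div_le_iff₀ (by positivity)).mp hη) 2
      _ = η ^ 2 * c ^ 2 * S := by rw [mul_pow, mul_pow, Real.sq_sqrt hS.le]; ring
  refine div_le_of_le_mul₀ (by positivity) hη_nonneg ?_
  nlinarith [mul_le_mul_of_nonneg_left hm_sq hρ,
    mul_le_mul_of_nonneg_left hηS (mul_nonneg hη_nonneg (sq_nonneg c))]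

section SGD

variable {E : Type*} [NormedAddCommGroup E] [InnerProductSpace ℝ E]

theorem mul_norm_sq_le_inner_of_armijo {f : E → ℝ} {g x xstar : E} {ρ γ : ℝ}
    (hconv : f x + ⟪g, xstar - x⟫ ≤ f xstar) (hmin : f xstar ≤ f (x - γ • g))
    (harmijo : f (x - γ • g) ≤ f x - ρ * γ * ‖g‖ ^ 2) :
    ρ * γ * ‖g‖ ^ 2 ≤ ⟪g, x - xstar⟫ := by
  rw [← neg_sub, inner_neg_right] at hconv
  linarith

theorem norm_sub_smul_sq_le {g y : E} {η : ℝ} (hη : 0 ≤ η) (h : η * ‖g‖ ^ 2 ≤ ⟪g, y⟫) :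
    ‖y - η • g‖ ^ 2 ≤ ‖y‖ ^ 2 - η * ⟪g, y⟫ := by
  rw [norm_sub_sq_real, real_inner_smul_right, real_inner_comm, norm_smul, mul_pow,
    Real.norm_eq_abs, sq_abs]
  nlinarith [mul_le_mul_of_nonneg_left h hη]

end SGD
theorem stmt_15_general {d : ℕ} (L c_l ρ γmax : ℝ) (hL : 0 < L) (hcl : 0 < c_l)
    (hρ : ρ ∈ Set.Ioo (0 : ℝ) 1) (hγmax : 0 < γmax)
    (xstar : EuclideanSpace ℝ (Fin d))
    (f : ℕ → EuclideanSpace ℝ (Fin d) → ℝ)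
    (G : ℕ → EuclideanSpace ℝ (Fin d) → EuclideanSpace ℝ (Fin d))
    (x : ℕ → EuclideanSpace ℝ (Fin d)) (γ η : ℕ → ℝ)
    (hconv : ∀ t u v, f t v ≥ f t u + ⟪G t u, v - u⟫)
    (hmin : ∀ t y, f t xstar ≤ f t y)
    (hArmijo : ∀ t, f t (x t - γ t • G t (x t)) ≤ f t (x t) - ρ * γ t * ‖G t (x t)‖ ^ 2)
    (hγlow : ∀ t, min ((1 - ρ) / L) γmax ≤ γ t)
    (hη0 : η 0 = γ 0 / (c_l * Real.sqrt (γ 0 * ‖G 0 (x 0)‖ ^ 2)))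
    (hη : ∀ t, η (t + 1) = min
      (γ (t + 1) /
        (c_l * Real.sqrt (∑ s ∈ range (t + 2), γ s * ‖G s (x s)‖ ^ 2)))
      (η t))
    (hx : ∀ t, x (t + 1) = x t - η t • G t (x t))
    (hscale : 1 ≤ c_l * ρ * Real.sqrt (γ 0 * ‖G 0 (x 0)‖ ^ 2)) :
    ∀ t : ℕ,
      ‖x (t + 1) - xstar‖ ^ 2 ≤
          ‖x t - xstar‖ ^ 2 - η t * ⟪G t (x t), x t - xstar⟫ ∧
      η t ≥ ρ * (min ((1 - ρ) / L) γmax) ^ 2 / (c_l ^ 2 * ‖x 0 - xstar‖ ^ 2) := by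
  set S : ℕ → ℝ := fun t => ∑ s ∈ range (t + 1), γ s * ‖G s (x s)‖ ^ 2
  have hγmin : 0 < min ((1 - ρ) / L) γmax := lt_min (div_pos (sub_pos.mpr hρ.2) hL) hγmax
  have hγ : ∀ t, 0 ≤ γ t := fun t => hγmin.le.trans (hγlow t)
  have hS_mono : Monotone S := fun s t hst =>
    sum_le_sum_of_subset_of_nonneg (range_mono (by omega)) fun i _ _ =>
      mul_nonneg (hγ i) (sq_nonneg _)
  have hS0 : S 0 = γ 0 * ‖G 0 (x 0)‖ ^ 2 := sum_range_one _
  have hρD : 1 ≤ ρ * (c_l * √(S 0)) := by rw [hS0]; linarith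
  have hS_pos : ∀ t, 0 < S t := fun t =>
    (Real.sqrt_pos.mp (pos_of_mul_pos_right (pos_of_mul_pos_right
      (one_pos.trans_le hρD) hρ.1.le) hcl.le)).trans_le (hS_mono t.zero_le)
  have hD_mono : Monotone fun t => c_l * √(S t) := fun s t hst =>
    mul_le_mul_of_nonneg_left (Real.sqrt_le_sqrt (hS_mono hst)) hcl.le
  have hD_pos : ∀ t, 0 < c_l * √(S t) := fun t => mul_pos hcl (Real.sqrt_pos.mpr (hS_pos t))
  have hstep : IsAdaSLSStepsize γ (fun t => c_l * √(S t)) η :=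
    ⟨by beta_reduce; rw [hS0]; exact hη0, hη⟩
  have hη_nonneg := hstep.nonneg hD_mono hD_pos hγ
  have hkey : ∀ t, ρ * γ t * ‖G t (x t)‖ ^ 2 ≤ ⟪G t (x t), x t - xstar⟫ := fun t =>
    mul_norm_sq_le_inner_of_armijo (hconv t _ _) (hmin t _) (hArmijo t)
  have ha : ∀ t, ‖x (t + 1) - xstar‖ ^ 2 ≤
      ‖x t - xstar‖ ^ 2 - η t * ⟪G t (x t), x t - xstar⟫ := fun t => by
    rw [hx t, sub_right_comm]
    exact norm_sub_smul_sq_le (hη_nonneg t) ((mul_le_mul_of_nonneg_right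
      (hstep.le_mul hD_mono hD_pos hρD (hγ t)) (sq_nonneg _)).trans (hkey t))
  intro t
  refine ⟨ha t, ?_⟩
  have hbudget : ρ * η t * S t ≤ ‖x 0 - xstar‖ ^ 2 :=
    calc ρ * η t * S t = η t * ∑ s ∈ range (t + 1), ρ * γ s * ‖G s (x s)‖ ^ 2 := by
          simp only [S, mul_sum]
          exact sum_congr rfl fun s _ => by ring
      _ ≤ ∑ s ∈ range (t + 1), η s * ⟪G s (x s), x s - xstar⟫ :=
          mul_sum_range_le_sum_mul_of_antitone hstep.antitone hη_nonneg
            (fun s => mul_nonneg (mul_nonneg hρ.1.le (hγ s)) (sq_nonneg _)) hkey t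
      _ ≤ ‖x 0 - xstar‖ ^ 2 :=
          sum_range_le_of_le_sub (u := fun t => ‖x t - xstar‖ ^ 2) (fun _ => sq_nonneg _) ha _
  exact div_le_of_mul_sum_le hγmin.le hρ.1.le hcl (hS_pos t)
    (hstep.div_le hD_mono hD_pos hγmin.le hγlow t) hbudget

/-- AdaSLS under interpolation, per-step estimates: with convex `L`-smooth `f t`
sharing a common minimizer `x*`, SGD iterates with AdaSLS stepsizes built from
Armijo scales `min{(1−ρ)/L, γ_max} ≤ γ_t ≤ γ_max`, nonzero gradients at the
iterates, and `c_l ρ √(γ_0 ‖∇f_0(x_0)‖²) ≥ 1`, for every `t`: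
(a) `‖x_{t+1} − x*‖² ≤ ‖x_t − x*‖² − η_t ⟨∇f_t(x_t), x_t − x*⟩`; and
(b) `η_t ≥ ρ·min{(1−ρ)/L, γ_max}² / (c_l² ‖x_0 − x*‖²)`. -/
theorem stmt_15 {d : ℕ} (L c_l ρ γmax : ℝ) (hL : 0 < L) (hcl : 0 < c_l)
    (hρ : ρ ∈ Set.Ioo (0 : ℝ) 1) (hγmax : 0 < γmax)
    (xstar : EuclideanSpace ℝ (Fin d))
    (f : ℕ → EuclideanSpace ℝ (Fin d) → ℝ)
    (G : ℕ → EuclideanSpace ℝ (Fin d) → EuclideanSpace ℝ (Fin d))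
    (x : ℕ → EuclideanSpace ℝ (Fin d)) (γ η : ℕ → ℝ)
    (hgrad : ∀ t y, HasGradientAt (f t) (G t y) y)
    (hconv : ∀ t u v, f t v ≥ f t u + ⟪G t u, v - u⟫)
    (hsmooth : ∀ t u v, ‖G t u - G t v‖ ≤ L * ‖u - v‖)
    (hmin : ∀ t y, f t xstar ≤ f t y)
    (hGne : ∀ t, G t (x t) ≠ 0)
    (hArmijo : ∀ t, f t (x t - γ t • G t (x t)) ≤ f t (x t) - ρ * γ t * ‖G t (x t)‖ ^ 2)
    (hγlow : ∀ t, min ((1 - ρ) / L) γmax ≤ γ t)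
    (hγhigh : ∀ t, γ t ≤ γmax)
    (hη0 : η 0 = γ 0 / (c_l * Real.sqrt (γ 0 * ‖G 0 (x 0)‖ ^ 2)))
    (hη : ∀ t, η (t + 1) = min
      (γ (t + 1) /
        (c_l * Real.sqrt (∑ s ∈ range (t + 2), γ s * ‖G s (x s)‖ ^ 2)))
      (η t))
    (hx : ∀ t, x (t + 1) = x t - η t • G t (x t))
    (hscale : 1 ≤ c_l * ρ * Real.sqrt (γ 0 * ‖G 0 (x 0)‖ ^ 2)) :
    ∀ t : ℕ,
      ‖x (t + 1) - xstar‖ ^ 2 ≤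
          ‖x t - xstar‖ ^ 2 - η t * ⟪G t (x t), x t - xstar⟫ ∧
      η t ≥ ρ * (min ((1 - ρ) / L) γmax) ^ 2 / (c_l ^ 2 * ‖x 0 - xstar‖ ^ 2) :=
  stmt_15_general L c_l ρ γmax hL hcl hρ hγmax xstar f G x γ η hconv hmin hArmijo hγlow hη0 hη hx
    hscale
end

section
/- Let 0 < μ ≤ L and c_p > 0. For each t ∈ ℕ let f_t : E → ℝ be differentiable, L-smooth and μ-strongly convex, with a common minimizer x* ∈ E satisfying f_t(x*) ≤ f_t(y) for all y ∈ E and all t. Starting from x_0 ∈ E, define SGD iterates x_{t+1} = x_t − η_t∇f_t(x_t), where (η_t) are the AdaSPS stepsizes with ℓ_t = f_t(x*), and assume ∇f_t(x_t) ≠ 0 for all t. If c_p·√(f_0(x_0) − f_0(x*)) ≥ 1, then for every T ∈ ℕ: ‖x_T − x*‖² ≤ (1 − μ/(4·c_p²·L²·‖x_0 − x*‖²))^T · ‖x_0 − x*‖², and the contraction factor satisfies 0 ≤ 1 − μ/(4·c_p²·L²·‖x_0 − x*‖²) < 1. -/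
open Finset RealInnerProductSpace

/-!
Write `Fₜ = fₜ(xₜ) − fₜ(x*)`, `Sₜ = F₀ + ⋯ + Fₜ` and `eₜ = ‖xₜ − x*‖²`. Since `c_p √Sₜ ≥ 1`,
the AdaSPS cap gives `ηₜ ‖∇fₜ(xₜ)‖² ≤ Fₜ`, and strong convexity then yields the one-step bound
`eₜ₊₁ ≤ (1 − μηₜ) eₜ − ηₜ Fₜ`. Telescoping, with `η` nonincreasing, gives `ηₜ Sₜ ≤ e₀`; on the
other hand smoothness and interpolation give `‖∇fₛ(xₛ)‖² ≤ 2L Fₛ`, hence `ηₜ ≥ 1 / (2L c_p √Sₜ)`.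
Squaring the latter and using the former, `ηₜ ≥ 1 / (4 c_p² L² e₀)`: a uniform lower bound on the
stepsize, which turns the one-step bound into a linear contraction.
-/

section Smooth

variable {E : Type*} [NormedAddCommGroup E] [InnerProductSpace ℝ E] [CompleteSpace E]
  {f : E → ℝ} {G : E → E} {L : ℝ}

theorem le_add_inner_add_sq_of_lipschitz_gradient (hgrad : ∀ y, HasGradientAt f (G y) y)
    (hsmooth : ∀ u v, ‖G u - G v‖ ≤ L * ‖u - v‖) (u v : E) :
    f v ≤ f u + ⟪G u, v - u⟫ + L / 2 * ‖v - u‖ ^ 2 := by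
  set w := v - u
  let φ : ℝ → ℝ := fun s => f (u + s • w) - s * ⟪G u, w⟫ - L / 2 * s ^ 2 * ‖w‖ ^ 2
  have hφ : ∀ s, HasDerivAt φ (⟪G (u + s • w) - G u, w⟫ - L * s * ‖w‖ ^ 2) s := by
    intro s
    have hline : HasDerivAt (fun s : ℝ => u + s • w) w s := by
      simpa using ((hasDerivAt_id s).smul_const w).const_add u
    have hf : HasDerivAt (fun s : ℝ => f (u + s • w)) ⟪G (u + s • w), w⟫ s := by
      have := (hgrad _).hasFDerivAt.comp_hasDerivAt s hline
      rw [InnerProductSpace.toDual_apply_apply] at this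
      exact this
    have hq : HasDerivAt (fun s : ℝ => L / 2 * s ^ 2 * ‖w‖ ^ 2) (L * s * ‖w‖ ^ 2) s :=
      (((hasDerivAt_pow 2 s).const_mul (L / 2)).mul_const (‖w‖ ^ 2)).congr_deriv (by push_cast; ring)
    exact ((hf.sub (hasDerivAt_mul_const _)).sub hq).congr_deriv (by rw [inner_sub_left])
  have hanti : AntitoneOn φ (Set.Ici 0) := by
    refine antitoneOn_of_hasDerivWithinAt_nonpos (convex_Ici 0)
      (fun s _ => (hφ s).continuousAt.continuousWithinAt) (fun s _ => (hφ s).hasDerivWithinAt) ?_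
    intro s hs
    rw [interior_Ici, Set.mem_Ioi] at hs
    have : ⟪G (u + s • w) - G u, w⟫ ≤ L * s * ‖w‖ ^ 2 := calc
      _ ≤ ‖G (u + s • w) - G u‖ * ‖w‖ := real_inner_le_norm _ _
      _ ≤ L * ‖(u + s • w) - u‖ * ‖w‖ := by gcongr; exact hsmooth _ _
      _ = L * s * ‖w‖ ^ 2 := by simp [norm_smul, abs_of_pos hs]; ring
    linarith
  have h := hanti (Set.mem_Ici.2 le_rfl) (Set.mem_Ici.2 zero_le_one) zero_le_one
  norm_num [φ, w] at h
  linarith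

theorem sq_norm_gradient_le (hL : 0 < L) (hgrad : ∀ y, HasGradientAt f (G y) y)
    (hsmooth : ∀ u v, ‖G u - G v‖ ≤ L * ‖u - v‖) {xstar : E} (hmin : ∀ y, f xstar ≤ f y) (u : E) :
    ‖G u‖ ^ 2 ≤ 2 * L * (f u - f xstar) := by
  have h := le_add_inner_add_sq_of_lipschitz_gradient hgrad hsmooth u (u - L⁻¹ • G u)
  rw [sub_sub_cancel_left, inner_neg_right, real_inner_smul_right, real_inner_self_eq_norm_sq,
    norm_neg, norm_smul, mul_pow, Real.norm_eq_abs, sq_abs] at h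
  have hquad : -(L⁻¹ * ‖G u‖ ^ 2) + L / 2 * (L⁻¹ ^ 2 * ‖G u‖ ^ 2) = -(‖G u‖ ^ 2 / (2 * L)) := by
    field_simp
    ring
  have key : ‖G u‖ ^ 2 / (2 * L) ≤ f u - f xstar := by linarith [hmin (u - L⁻¹ • G u)]
  rw [div_le_iff₀ (by positivity)] at key
  linarith

end Smooth

theorem norm_sub_smul_sub_sq_le {E : Type*} [NormedAddCommGroup E] [InnerProductSpace ℝ E]
    {x y g : E} {a b η μ : ℝ} (hη : 0 ≤ η)
    (hconv : a + ⟪g, y - x⟫ + μ / 2 * ‖y - x‖ ^ 2 ≤ b) (hcap : η * ‖g‖ ^ 2 ≤ a - b) :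
    ‖x - η • g - y‖ ^ 2 ≤ (1 - μ * η) * ‖x - y‖ ^ 2 - η * (a - b) := by
  have hexpand : ‖x - η • g - y‖ ^ 2 = ‖x - y‖ ^ 2 - 2 * η * ⟪g, x - y⟫ + η ^ 2 * ‖g‖ ^ 2 := by
    rw [sub_right_comm, norm_sub_sq_real, real_inner_smul_right, real_inner_comm, norm_smul,
      mul_pow, Real.norm_eq_abs, sq_abs]
    ring
  rw [← neg_sub x y, inner_neg_right, norm_neg] at hconv
  rw [hexpand]
  nlinarith [mul_le_mul_of_nonneg_left hcap hη, mul_le_mul_of_nonneg_left hconv hη]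

theorem eq_inf'_range_of_eq_min {α : Type*} [LinearOrder α] {a η : ℕ → α} (h0 : η 0 = a 0)
    (hsucc : ∀ t, η (t + 1) = min (a (t + 1)) (η t)) (t : ℕ) :
    η t = (range (t + 1)).inf' nonempty_range_add_one a := by
  induction t with
  | zero => simpa using h0
  | succ t ih => rw [hsucc, ih]; simp [range_add_one (n := t + 1), inf'_insert]

theorem mul_sum_range_le_of_le_sub_mul {e η F : ℕ → ℝ} (he : ∀ t, 0 ≤ e t) (hF : ∀ t, 0 ≤ F t)
    (hη : Antitone η) (hstep : ∀ t, e (t + 1) ≤ e t - η t * F t) (t : ℕ) :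
    η t * ∑ s ∈ range (t + 1), F s ≤ e 0 := calc
  η t * ∑ s ∈ range (t + 1), F s ≤ ∑ s ∈ range (t + 1), η s * F s := by
    rw [mul_sum]
    gcongr with s hs
    · exact hF s
    · exact hη (mem_range_succ_iff.1 hs)
  _ ≤ ∑ s ∈ range (t + 1), (e s - e (s + 1)) := by
    gcongr with s
    linarith [hstep s]
  _ ≤ e 0 := by
    rw [sum_range_sub']
    linarith [he (t + 1)]

theorem one_div_sq_mul_le_of_one_div_mul_sqrt_le {a S η e : ℝ} (ha : 0 < a) (hS : 0 < S)
    (hlow : 1 / (a * √S) ≤ η) (hup : η * S ≤ e) : 1 / (a ^ 2 * e) ≤ η := by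
  have hsqrt : 0 < √S := Real.sqrt_pos.2 hS
  rw [div_le_iff₀ (by positivity)] at hlow
  have hη : 0 < η := by nlinarith [mul_pos ha hsqrt]
  have he : 0 < e := by nlinarith
  rw [div_le_iff₀ (by positivity)]
  have hsq : 1 ≤ a ^ 2 * S * η ^ 2 := by
    nlinarith [Real.sq_sqrt hS.le, mul_le_mul hlow hlow zero_le_one (by positivity)]
  nlinarith [mul_le_mul_of_nonneg_left hup (by positivity : 0 ≤ a ^ 2 * η)]

/-- With `F t = f_t(x_t) − ℓ_t` and `g t = ‖∇f_t(x_t)‖`, the AdaSPS stepsize `η t` is the running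
minimum of these ratios over `s ≤ t`. -/
noncomputable def adaSPSRatio (c : ℝ) (F g : ℕ → ℝ) (t : ℕ) : ℝ :=
  F t / (c * g t ^ 2 * √(∑ s ∈ range (t + 1), F s))

section AdaSPS

variable {c L μ : ℝ} {F g η : ℕ → ℝ}
  (hη : ∀ t, η t = (range (t + 1)).inf' nonempty_range_add_one (adaSPSRatio c F g))
include hη

theorem adaSPS_pos (hc : 0 < c) (hF : ∀ t, 0 < F t) (hg : ∀ t, 0 < g t) (t : ℕ) : 0 < η t := by
  rw [hη, lt_inf'_iff]
  intro s _
  have := hg s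
  have := Real.sqrt_pos.2 (sum_pos (fun i _ => hF i) (nonempty_range_add_one (n := s)))
  unfold adaSPSRatio
  exact div_pos (hF s) (by positivity)

theorem adaSPS_antitone : Antitone η :=
  antitone_nat_of_succ_le fun t => by
    rw [hη, hη]
    exact inf'_mono (adaSPSRatio c F g) (range_subset_range.2 (t + 1).le_succ) _

theorem adaSPS_mul_sq_le (hc : 0 < c) (hF : ∀ t, 0 ≤ F t) (hscale : 1 ≤ c * √(F 0)) (t : ℕ) :
    η t * g t ^ 2 ≤ F t := by
  have hS : 1 ≤ c * √(∑ s ∈ range (t + 1), F s) :=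
    hscale.trans (by gcongr; exact single_le_sum (fun i _ => hF i) (by simp))
  rcases eq_or_ne (g t) 0 with hg | hg
  · simpa [hg] using hF t
  calc η t * g t ^ 2 ≤ adaSPSRatio c F g t * g t ^ 2 := by
        gcongr
        rw [hη]
        exact inf'_le _ (self_mem_range_succ t)
    _ = F t / (c * √(∑ s ∈ range (t + 1), F s)) := by
        unfold adaSPSRatio
        field_simp
    _ ≤ F t := div_le_self (hF t) hS

theorem one_div_mul_sqrt_le_adaSPS (hL : 0 < L) (hc : 0 < c) (hF : ∀ t, 0 < F t)
    (hg : ∀ t, 0 < g t) (hgF : ∀ t, g t ^ 2 ≤ 2 * L * F t) (t : ℕ) :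
    1 / (2 * L * c * √(∑ s ∈ range (t + 1), F s)) ≤ η t := by
  rw [hη, le_inf'_iff]
  intro s hs
  have hSs : 0 < √(∑ i ∈ range (s + 1), F i) :=
    Real.sqrt_pos.2 (sum_pos (fun i _ => hF i) nonempty_range_add_one)
  have := hF s
  have := hg s
  calc 1 / (2 * L * c * √(∑ i ∈ range (t + 1), F i))
      ≤ 1 / (2 * L * c * √(∑ i ∈ range (s + 1), F i)) := by
        gcongr
        · exact fun i _ _ => (hF i).le
        · exact mem_range_succ_iff.1 hs
    _ = F s / (c * (2 * L * F s) * √(∑ i ∈ range (s + 1), F i)) := by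
        field_simp
    _ ≤ adaSPSRatio c F g s := by
        unfold adaSPSRatio
        gcongr
        exact hgF s

theorem adaSPS_linear_rate (hL : 0 < L) (hμ : 0 < μ) (hc : 0 < c) (hF : ∀ t, 0 < F t)
    (hg : ∀ t, 0 < g t) (hgF : ∀ t, g t ^ 2 ≤ 2 * L * F t) {e : ℕ → ℝ} (he : ∀ t, 0 ≤ e t)
    (hstep : ∀ t, e (t + 1) ≤ (1 - μ * η t) * e t - η t * F t) :
    (∀ T : ℕ, e T ≤ (1 - μ / (4 * c ^ 2 * L ^ 2 * e 0)) ^ T * e 0) ∧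
      0 ≤ 1 - μ / (4 * c ^ 2 * L ^ 2 * e 0) ∧ 1 - μ / (4 * c ^ 2 * L ^ 2 * e 0) < 1 := by
  have hηpos := adaSPS_pos hη hc hF hg
  have hSη : ∀ t, η t * ∑ s ∈ range (t + 1), F s ≤ e 0 :=
    mul_sum_range_le_of_le_sub_mul he (fun t => (hF t).le) (adaSPS_antitone hη)
      fun t => by nlinarith [hstep t, mul_nonneg (mul_nonneg hμ.le (hηpos t).le) (he t)]
  have he0 : 0 < e 0 := (mul_pos (hηpos 0) (by simpa using hF 0)).trans_le (hSη 0)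
  have hρ : ∀ t, μ / (4 * c ^ 2 * L ^ 2 * e 0) ≤ μ * η t := fun t => by
    have h := one_div_sq_mul_le_of_one_div_mul_sqrt_le (by positivity)
      (sum_pos (fun i _ => hF i) nonempty_range_add_one)
      (one_div_mul_sqrt_le_adaSPS hη hL hc hF hg hgF t) (hSη t)
    rw [div_le_iff₀ (by positivity)] at h ⊢
    nlinarith
  have hρ0 : 0 ≤ 1 - μ / (4 * c ^ 2 * L ^ 2 * e 0) := by
    -- `0 ≤ e 1 < (1 - μ η 0) e 0`
    have : μ * η 0 < 1 := by
      nlinarith [hstep 0, he 1, mul_pos (hηpos 0) (hF 0)]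
    linarith [hρ 0]
  refine ⟨fun T => le_geom hρ0 T fun t _ => ?_, hρ0, ?_⟩
  · nlinarith [hstep t, hρ t, he t, mul_pos (hηpos t) (hF t)]
  · have : 0 < μ / (4 * c ^ 2 * L ^ 2 * e 0) := by positivity
    linarith

end AdaSPS

/-- AdaSPS linear convergence under strong convexity and interpolation: with
`L`-smooth, `μ`-strongly convex `f t` (`0 < μ ≤ L`) sharing a common minimizer `x*`,
SGD iterates with AdaSPS stepsizes (`ℓ t = f t x*`), nonzero gradients at the
iterates and `c_p √(f_0(x_0) − f_0(x*)) ≥ 1`, one has for every `T`: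
`‖x_T − x*‖² ≤ (1 − μ/(4 c_p² L² ‖x_0 − x*‖²))^T ‖x_0 − x*‖²`, and the contraction
factor lies in `[0, 1)`. -/
theorem stmt_16 {d : ℕ} (L μ c_p : ℝ) (hμ : 0 < μ) (hμL : μ ≤ L) (hcp : 0 < c_p)
    (xstar : EuclideanSpace ℝ (Fin d))
    (f : ℕ → EuclideanSpace ℝ (Fin d) → ℝ)
    (G : ℕ → EuclideanSpace ℝ (Fin d) → EuclideanSpace ℝ (Fin d))
    (x : ℕ → EuclideanSpace ℝ (Fin d)) (η : ℕ → ℝ)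
    (hgrad : ∀ t y, HasGradientAt (f t) (G t y) y)
    (hsmooth : ∀ t u v, ‖G t u - G t v‖ ≤ L * ‖u - v‖)
    (hsconv : ∀ t u v, f t v ≥ f t u + ⟪G t u, v - u⟫ + μ / 2 * ‖v - u‖ ^ 2)
    (hmin : ∀ t y, f t xstar ≤ f t y)
    (hGne : ∀ t, G t (x t) ≠ 0)
    (hη0 : η 0 = (f 0 (x 0) - f 0 xstar) /
      (c_p * ‖G 0 (x 0)‖ ^ 2 * Real.sqrt (f 0 (x 0) - f 0 xstar)))
    (hη : ∀ t, η (t + 1) = min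
      ((f (t + 1) (x (t + 1)) - f (t + 1) xstar) /
        (c_p * ‖G (t + 1) (x (t + 1))‖ ^ 2 *
          Real.sqrt (∑ s ∈ range (t + 2), (f s (x s) - f s xstar))))
      (η t))
    (hx : ∀ t, x (t + 1) = x t - η t • G t (x t))
    (hscale : 1 ≤ c_p * Real.sqrt (f 0 (x 0) - f 0 xstar)) :
    (∀ T : ℕ, ‖x T - xstar‖ ^ 2 ≤
        (1 - μ / (4 * c_p ^ 2 * L ^ 2 * ‖x 0 - xstar‖ ^ 2)) ^ T * ‖x 0 - xstar‖ ^ 2) ∧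
      0 ≤ 1 - μ / (4 * c_p ^ 2 * L ^ 2 * ‖x 0 - xstar‖ ^ 2) ∧
      1 - μ / (4 * c_p ^ 2 * L ^ 2 * ‖x 0 - xstar‖ ^ 2) < 1 := by
  have hL : 0 < L := hμ.trans_le hμL
  set F : ℕ → ℝ := fun t => f t (x t) - f t xstar
  set g : ℕ → ℝ := fun t => ‖G t (x t)‖
  have hg : ∀ t, 0 < g t := fun t => norm_pos_iff.2 (hGne t)
  have hgF : ∀ t, g t ^ 2 ≤ 2 * L * F t := fun t =>
    sq_norm_gradient_le hL (hgrad t) (hsmooth t) (hmin t) (x t)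
  have hF : ∀ t, 0 < F t := fun t => by nlinarith [hgF t, pow_pos (hg t) 2]
  have hηinf : ∀ t, η t = (range (t + 1)).inf' nonempty_range_add_one (adaSPSRatio c_p F g) :=
    eq_inf'_range_of_eq_min (by simpa [adaSPSRatio] using hη0) hη
  refine adaSPS_linear_rate hηinf hL hμ hcp hF hg hgF (fun t => by positivity) fun t => ?_
  rw [hx t]
  exact norm_sub_smul_sub_sq_le (adaSPS_pos hηinf hcp hF hg t).le (hsconv t (x t) xstar)
    (adaSPS_mul_sq_le hηinf hcp (fun s => (hF s).le) hscale t)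
end

section
/- Let 0 < μ ≤ L and c_p > 0. For each t ∈ ℕ let f_t : E → ℝ be differentiable, L-smooth and μ-strongly convex, let ℓ_t ∈ ℝ satisfy ℓ_t ≤ f_t(y) for all y ∈ E, and let x* ∈ E and σ ≥ 0 be such that f_t(x*) − ℓ_t ≤ σ² for all t. Starting from x_0 ∈ E, define SGD iterates x_{t+1} = x_t − η_t∇f_t(x_t), where (η_t) are the AdaSPS stepsizes, and assume ∇f_t(x_t) ≠ 0 for all t. Set b = 1/(4·c_p³·√(f_0(x_0) − ℓ_0)). Then for every t ∈ ℕ: ‖x_t − x*‖² ≤ max{ ‖x_0 − x*‖², (2σ² + b)/μ, (2σ² + b)·η_0 }. -/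
open Finset RealInnerProductSpace

private lemma adasps_aux_key (cp A Ft sF0 : ℝ) (hcp : 0 < cp) (hA : 0 < A) (hFt : 0 < Ft)
    (hFA : Ft ≤ A ^ 2) (hF0A : sF0 ≤ A) (hsF0 : 0 < sF0) :
    Ft / (cp * A) ≤ 2 * Ft + 1 / (4 * cp ^ 3 * sF0) := by
  by_cases hc : 1 / 2 ≤ cp * A
  · have h1 : Ft / (cp * A) ≤ 2 * Ft := by
      rw [div_le_iff₀ (mul_pos hcp hA)]
      nlinarith [mul_le_mul_of_nonneg_right hc hFt.le]
    have hb : 0 < 1 / (4 * cp ^ 3 * sF0) := by positivity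
    linarith
  · push_neg at hc
    have hcA := mul_pos hcp hA
    have h4 : 4 * (cp * A) ^ 2 < 1 := by nlinarith [mul_lt_mul'' hc hc hcA.le hcA.le]
    have h2 : Ft / (cp * A) ≤ 1 / (4 * cp ^ 3 * sF0) := by
      rw [div_le_div_iff₀ hcA (by positivity)]
      calc Ft * (4 * cp ^ 3 * sF0) ≤ A ^ 2 * (4 * cp ^ 3 * A) := by
            apply mul_le_mul hFA _ (by positivity) (sq_nonneg A)
            have h5 : (0:ℝ) ≤ 4 * cp ^ 3 := by positivity
            nlinarith [mul_le_mul_of_nonneg_left hF0A h5]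
        _ = (cp * A) * (4 * (cp * A) ^ 2) := by ring
        _ ≤ (cp * A) * 1 := mul_le_mul_of_nonneg_left h4.le hcA.le
        _ = 1 * (cp * A) := by ring
    linarith
private lemma adasps_aux_step (η r inn gg Ft σ2 b Q μ : ℝ) (hη : 0 ≤ η)
    (hinner : Ft - σ2 + μ / 2 * r ≤ inn) (hquad : η ^ 2 * gg ≤ η * Q)
    (hk : Q ≤ 2 * Ft + b) :
    r - 2 * η * inn + η ^ 2 * gg ≤ (1 - μ * η) * r + η * (2 * σ2 + b) := by
  nlinarith [mul_le_mul_of_nonneg_left hinner hη, mul_le_mul_of_nonneg_left hk hη]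

private lemma adasps_aux_ind (μ ηt η0 c r r' M : ℝ) (hμ : 0 < μ) (hηt : 0 < ηt)
    (hη0 : ηt ≤ η0) (hc : 0 ≤ c) (hr : 0 ≤ r) (h : r' ≤ (1 - μ * ηt) * r + ηt * c)
    (hih : r ≤ M) (hM1 : c / μ ≤ M) (hM2 : c * η0 ≤ M) : r' ≤ M := by
  by_cases hcc : μ * ηt ≤ 1
  · have h1 : (1 - μ * ηt) * r ≤ (1 - μ * ηt) * M := mul_le_mul_of_nonneg_left hih (by linarith)
    have hM1' : c ≤ μ * M := by rw [div_le_iff₀ hμ] at hM1; linarith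
    nlinarith [mul_le_mul_of_nonneg_left hM1' hηt.le]
  · push_neg at hcc
    have h1 : (1 - μ * ηt) * r ≤ 0 := mul_nonpos_of_nonpos_of_nonneg (by linarith) hr
    nlinarith [mul_le_mul_of_nonneg_right hη0 hc]

/-- Bounded iterates for SGD with AdaSPS: with `L`-smooth, `μ`-strongly convex `f t`
(`0 < μ ≤ L`), lower bounds `ℓ t ≤ f t`, a point `x*` with `f_t(x*) − ℓ_t ≤ σ²`,
SGD iterates with AdaSPS stepsizes and nonzero gradients at the iterates, setting
`b = 1/(4 c_p³ √(f_0(x_0) − ℓ_0))`, one has for every `t`: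
`‖x_t − x*‖² ≤ max{‖x_0 − x*‖², (2σ² + b)/μ, (2σ² + b)·η_0}`. -/
theorem stmt_17 {d : ℕ} (L μ c_p σ : ℝ) (hμ : 0 < μ) (hμL : μ ≤ L) (hcp : 0 < c_p)
    (hσ : 0 ≤ σ)
    (xstar : EuclideanSpace ℝ (Fin d))
    (f : ℕ → EuclideanSpace ℝ (Fin d) → ℝ)
    (G : ℕ → EuclideanSpace ℝ (Fin d) → EuclideanSpace ℝ (Fin d))
    (x : ℕ → EuclideanSpace ℝ (Fin d)) (ℓ : ℕ → ℝ) (η : ℕ → ℝ)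
    (hgrad : ∀ t y, HasGradientAt (f t) (G t y) y)
    (hsmooth : ∀ t u v, ‖G t u - G t v‖ ≤ L * ‖u - v‖)
    (hsconv : ∀ t u v, f t v ≥ f t u + ⟪G t u, v - u⟫ + μ / 2 * ‖v - u‖ ^ 2)
    (hℓ : ∀ t y, ℓ t ≤ f t y)
    (hσ2 : ∀ t, f t xstar - ℓ t ≤ σ ^ 2)
    (hGne : ∀ t, G t (x t) ≠ 0)
    (hη0 : η 0 = (f 0 (x 0) - ℓ 0) /
      (c_p * ‖G 0 (x 0)‖ ^ 2 * Real.sqrt (f 0 (x 0) - ℓ 0)))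
    (hη : ∀ t, η (t + 1) = min
      ((f (t + 1) (x (t + 1)) - ℓ (t + 1)) /
        (c_p * ‖G (t + 1) (x (t + 1))‖ ^ 2 *
          Real.sqrt (∑ s ∈ range (t + 2), (f s (x s) - ℓ s))))
      (η t))
    (hx : ∀ t, x (t + 1) = x t - η t • G t (x t)) :
    ∀ t : ℕ, ‖x t - xstar‖ ^ 2 ≤
      max (‖x 0 - xstar‖ ^ 2)
        (max ((2 * σ ^ 2 + 1 / (4 * c_p ^ 3 * Real.sqrt (f 0 (x 0) - ℓ 0))) / μ)
          ((2 * σ ^ 2 + 1 / (4 * c_p ^ 3 * Real.sqrt (f 0 (x 0) - ℓ 0))) * η 0)) := by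
  -- positivity of the Polyak gaps
  have hFpos : ∀ t, 0 < f t (x t) - ℓ t := by
    intro t
    have h0 : 0 ≤ f t (x t) - ℓ t := sub_nonneg.mpr (hℓ t (x t))
    rcases h0.lt_or_eq with h | h
    · exact h
    · exfalso
      apply hGne t
      have hmin : ∀ y, f t (x t) ≤ f t y := by
        intro y
        have := hℓ t y
        linarith
      have hlm : IsLocalMin (f t) (x t) := Filter.Eventually.of_forall hmin
      have hz := hlm.hasFDerivAt_eq_zero (hgrad t (x t)).hasFDerivAt
      have h2 : (InnerProductSpace.toDual ℝ (EuclideanSpace ℝ (Fin d))) (G t (x t)) = 0 := hz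
      simpa using
        (InnerProductSpace.toDual ℝ (EuclideanSpace ℝ (Fin d))).map_eq_zero_iff.mp h2
  have hgpos : ∀ t, 0 < ‖G t (x t)‖ := fun t => norm_pos_iff.mpr (hGne t)
  have hSpos : ∀ t : ℕ, 0 < ∑ s ∈ range (t + 1), (f s (x s) - ℓ s) :=
    fun t => Finset.sum_pos (fun s _ => hFpos s) (by simp)
  have hF0S : ∀ t : ℕ, f 0 (x 0) - ℓ 0 ≤ ∑ s ∈ range (t + 1), (f s (x s) - ℓ s) :=
    fun t => Finset.single_le_sum (f := fun s => f s (x s) - ℓ s)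
      (fun s _ => (hFpos s).le) (mem_range.mpr (Nat.succ_pos t))
  have hFS : ∀ t : ℕ, f t (x t) - ℓ t ≤ ∑ s ∈ range (t + 1), (f s (x s) - ℓ s) :=
    fun t => Finset.single_le_sum (f := fun s => f s (x s) - ℓ s)
      (fun s _ => (hFpos s).le) (mem_range.mpr (Nat.lt_succ_self t))
  have hsqS : ∀ t : ℕ, Real.sqrt (f 0 (x 0) - ℓ 0) ≤
      Real.sqrt (∑ s ∈ range (t + 1), (f s (x s) - ℓ s)) :=
    fun t => Real.sqrt_le_sqrt (hF0S t)
  have hsqF0 : 0 < Real.sqrt (f 0 (x 0) - ℓ 0) := Real.sqrt_pos.mpr (hFpos 0)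
  have hsqSpos : ∀ t : ℕ, 0 < Real.sqrt (∑ s ∈ range (t + 1), (f s (x s) - ℓ s)) :=
    fun t => Real.sqrt_pos.mpr (hSpos t)
  -- step size bounds
  have hηle : ∀ t, η t ≤ (f t (x t) - ℓ t) /
      (c_p * ‖G t (x t)‖ ^ 2 * Real.sqrt (∑ s ∈ range (t + 1), (f s (x s) - ℓ s))) := by
    intro t
    cases t with
    | zero =>
        rw [hη0]
        simp
    | succ t =>
        rw [hη t]
        exact min_le_left _ _
  have hηpos : ∀ t, 0 < η t := by
    intro t
    induction t with
    | zero =>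
        rw [hη0]
        exact div_pos (hFpos 0) (mul_pos (mul_pos hcp (pow_pos (hgpos 0) 2)) hsqF0)
    | succ t ih =>
        rw [hη t]
        exact lt_min (div_pos (hFpos (t + 1))
          (mul_pos (mul_pos hcp (pow_pos (hgpos (t + 1)) 2)) (hsqSpos (t + 1)))) ih
  have hηmono : ∀ t, η t ≤ η 0 := by
    intro t
    induction t with
    | zero => exact le_rfl
    | succ t ih => exact le_trans (by rw [hη t]; exact min_le_right _ _) ih
  have hbpos : 0 < 1 / (4 * c_p ^ 3 * Real.sqrt (f 0 (x 0) - ℓ 0)) :=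
    div_pos one_pos (mul_pos (by positivity) hsqF0)
  -- the key scalar inequality
  have hkey : ∀ t : ℕ, (f t (x t) - ℓ t) /
      (c_p * Real.sqrt (∑ s ∈ range (t + 1), (f s (x s) - ℓ s))) ≤
      2 * (f t (x t) - ℓ t) + 1 / (4 * c_p ^ 3 * Real.sqrt (f 0 (x 0) - ℓ 0)) := by
    intro t
    refine adasps_aux_key c_p _ _ _ hcp (hsqSpos t) (hFpos t) ?_ (hsqS t) hsqF0
    rw [Real.sq_sqrt (hSpos t).le]
    exact hFS t
  -- one-step descent
  have hstep : ∀ t, ‖x (t + 1) - xstar‖ ^ 2 ≤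
      (1 - μ * η t) * ‖x t - xstar‖ ^ 2 +
        η t * (2 * σ ^ 2 + 1 / (4 * c_p ^ 3 * Real.sqrt (f 0 (x 0) - ℓ 0))) := by
    intro t
    have hexp : ‖x (t + 1) - xstar‖ ^ 2 =
        ‖x t - xstar‖ ^ 2 - 2 * η t * ⟪x t - xstar, G t (x t)⟫ +
          η t ^ 2 * ‖G t (x t)‖ ^ 2 := by
      rw [hx t]
      have e : x t - η t • G t (x t) - xstar = (x t - xstar) - η t • G t (x t) := by abel
      rw [e, norm_sub_sq_real, real_inner_smul_right, norm_smul, mul_pow,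
        Real.norm_eq_abs, sq_abs]
      ring
    have hsc := hsconv t (x t) xstar
    have einner : ⟪G t (x t), xstar - x t⟫ = -⟪x t - xstar, G t (x t)⟫ := by
      rw [real_inner_comm, show xstar - x t = -(x t - xstar) by abel, inner_neg_left]
    rw [einner, norm_sub_rev] at hsc
    have hinner : (f t (x t) - ℓ t) - σ ^ 2 + μ / 2 * ‖x t - xstar‖ ^ 2 ≤
        ⟪x t - xstar, G t (x t)⟫ := by
      have := hσ2 t
      linarith [hsc]
    have hquad : η t ^ 2 * ‖G t (x t)‖ ^ 2 ≤
        η t * ((f t (x t) - ℓ t) /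
          (c_p * Real.sqrt (∑ s ∈ range (t + 1), (f s (x s) - ℓ s)))) := by
      have h1 : η t * (c_p * ‖G t (x t)‖ ^ 2 *
          Real.sqrt (∑ s ∈ range (t + 1), (f s (x s) - ℓ s))) ≤ f t (x t) - ℓ t :=
        (le_div_iff₀ (mul_pos (mul_pos hcp (pow_pos (hgpos t) 2)) (hsqSpos t))).mp (hηle t)
      have h2 : η t * ‖G t (x t)‖ ^ 2 ≤ (f t (x t) - ℓ t) /
          (c_p * Real.sqrt (∑ s ∈ range (t + 1), (f s (x s) - ℓ s))) := by
        rw [le_div_iff₀ (mul_pos hcp (hsqSpos t))]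
        calc η t * ‖G t (x t)‖ ^ 2 *
              (c_p * Real.sqrt (∑ s ∈ range (t + 1), (f s (x s) - ℓ s)))
            = η t * (c_p * ‖G t (x t)‖ ^ 2 *
              Real.sqrt (∑ s ∈ range (t + 1), (f s (x s) - ℓ s))) := by ring
          _ ≤ f t (x t) - ℓ t := h1
      calc η t ^ 2 * ‖G t (x t)‖ ^ 2 = η t * (η t * ‖G t (x t)‖ ^ 2) := by ring
        _ ≤ η t * _ := mul_le_mul_of_nonneg_left h2 (hηpos t).le
    rw [hexp]
    exact adasps_aux_step (η t) _ _ _ _ _ _ _ μ (hηpos t).le hinner hquad (hkey t)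
  -- conclusion by induction
  intro t
  induction t with
  | zero => exact le_max_left _ _
  | succ t ih =>
      refine adasps_aux_ind μ (η t) (η 0)
        (2 * σ ^ 2 + 1 / (4 * c_p ^ 3 * Real.sqrt (f 0 (x 0) - ℓ 0))) _ _ _
        hμ (hηpos t) (hηmono t) (by positivity) (by positivity) (hstep t) ih ?_ ?_
      · exact le_trans (le_max_left _ _) (le_max_right _ _)
      · exact le_trans (le_max_right _ _) (le_max_right _ _)
end

section
/- Let 0 < μ ≤ L, c_l > 0 and ρ ∈ (0,1). For each t ∈ ℕ let f_t : E → ℝ be differentiable, L-smooth and μ-strongly convex, with infimum f_t* = inf_{y} f_t(y), and let x* ∈ E and σ ≥ 0 be such that f_t(x*) − f_t* ≤ σ² for all t. Starting from x_0 ∈ E, define SGD iterates x_{t+1} = x_t − η_t∇f_t(x_t), where (η_t) are the AdaSLS stepsizes built from positive scales γ_t that satisfy the Armijo condition for f_t at x_t with parameter ρ, and assume ∇f_t(x_t) ≠ 0 for all t. Set b = 1/(4·c_l³·ρ²·√(γ_0‖∇f_0(x_0)‖²)). Then for every t ∈ ℕ: ‖x_t − x*‖² ≤ max{ ‖x_0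 − x*‖², (2σ² + b)/μ, (2σ² + b)·η_0 }. -/
open Finset RealInnerProductSpace

set_option maxHeartbeats 2000000

/-- Bounded iterates for SGD with AdaSLS: with `L`-smooth, `μ`-strongly convex `f t`
(`0 < μ ≤ L`) with infima `fstar t`, a point `x*` with `f_t(x*) − f_t* ≤ σ²`,
SGD iterates with AdaSLS stepsizes built from positive Armijo scales `γ t`, and
nonzero gradients at the iterates, setting
`b = 1/(4 c_l³ ρ² √(γ_0 ‖∇f_0(x_0)‖²))`, one has for every `t`:
`‖x_t − x*‖² ≤ max{‖x_0 − x*‖², (2σ² + b)/μ, (2σ² + b)·η_0}`. -/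
theorem stmt_18 {d : ℕ} (L μ c_l ρ σ : ℝ) (hμ : 0 < μ) (hμL : μ ≤ L) (hcl : 0 < c_l)
    (hρ : ρ ∈ Set.Ioo (0 : ℝ) 1) (hσ : 0 ≤ σ)
    (xstar : EuclideanSpace ℝ (Fin d))
    (f : ℕ → EuclideanSpace ℝ (Fin d) → ℝ)
    (G : ℕ → EuclideanSpace ℝ (Fin d) → EuclideanSpace ℝ (Fin d))
    (x : ℕ → EuclideanSpace ℝ (Fin d)) (fstar : ℕ → ℝ) (γ η : ℕ → ℝ)
    (hgrad : ∀ t y, HasGradientAt (f t) (G t y) y)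
    (hsmooth : ∀ t u v, ‖G t u - G t v‖ ≤ L * ‖u - v‖)
    (hsconv : ∀ t u v, f t v ≥ f t u + ⟪G t u, v - u⟫ + μ / 2 * ‖v - u‖ ^ 2)
    (hfstar : ∀ t, IsGLB (Set.range (f t)) (fstar t))
    (hσ2 : ∀ t, f t xstar - fstar t ≤ σ ^ 2)
    (hGne : ∀ t, G t (x t) ≠ 0)
    (hγpos : ∀ t, 0 < γ t)
    (hArmijo : ∀ t, f t (x t - γ t • G t (x t)) ≤ f t (x t) - ρ * γ t * ‖G t (x t)‖ ^ 2)
    (hη0 : η 0 = γ 0 / (c_l * Real.sqrt (γ 0 * ‖G 0 (x 0)‖ ^ 2)))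
    (hη : ∀ t, η (t + 1) = min
      (γ (t + 1) /
        (c_l * Real.sqrt (∑ s ∈ range (t + 2), γ s * ‖G s (x s)‖ ^ 2)))
      (η t))
    (hx : ∀ t, x (t + 1) = x t - η t • G t (x t)) :
    ∀ t : ℕ, ‖x t - xstar‖ ^ 2 ≤
      max (‖x 0 - xstar‖ ^ 2)
        (max
          ((2 * σ ^ 2 +
              1 / (4 * c_l ^ 3 * ρ ^ 2 * Real.sqrt (γ 0 * ‖G 0 (x 0)‖ ^ 2))) / μ)
          ((2 * σ ^ 2 +
              1 / (4 * c_l ^ 3 * ρ ^ 2 * Real.sqrt (γ 0 * ‖G 0 (x 0)‖ ^ 2))) * η 0)) := by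
  obtain ⟨hρ0, hρ1⟩ := hρ
  set S0 := Real.sqrt (γ 0 * ‖G 0 (x 0)‖ ^ 2) with hS0def
  have hg2 : ∀ s, 0 < ‖G s (x s)‖ ^ 2 := fun s => by
    have h := norm_pos_iff.mpr (hGne s); positivity
  have ha : ∀ s, 0 < γ s * ‖G s (x s)‖ ^ 2 := fun s => mul_pos (hγpos s) (hg2 s)
  have hS0 : 0 < S0 := Real.sqrt_pos.mpr (ha 0)
  set b := 1 / (4 * c_l ^ 3 * ρ ^ 2 * S0) with hbdef
  have hb : 0 < b := by rw [hbdef]; positivity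
  have hApos : ∀ s : ℕ, 0 < ∑ i ∈ range (s + 1), γ i * ‖G i (x i)‖ ^ 2 := fun s =>
    Finset.sum_pos (fun i _ => ha i) ⟨0, Finset.mem_range.mpr (Nat.succ_pos s)⟩
  have hA0le : ∀ s : ℕ, γ 0 * ‖G 0 (x 0)‖ ^ 2 ≤ ∑ i ∈ range (s + 1), γ i * ‖G i (x i)‖ ^ 2 :=
    fun s => Finset.single_le_sum (fun i _ => (ha i).le) (Finset.mem_range.mpr (Nat.succ_pos s))
  have hAtle : ∀ s : ℕ, γ s * ‖G s (x s)‖ ^ 2 ≤ ∑ i ∈ range (s + 1), γ i * ‖G i (x i)‖ ^ 2 :=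
    fun s => Finset.single_le_sum (fun i _ => (ha i).le) (Finset.self_mem_range_succ s)
  have hηle : ∀ s, η s ≤ γ s / (c_l * Real.sqrt (∑ i ∈ range (s + 1), γ i * ‖G i (x i)‖ ^ 2)) := by
    intro s
    cases s with
    | zero => rw [hη0, Finset.sum_range_one]
    | succ n => rw [hη n]; exact min_le_left _ _
  have hηpos : ∀ s, 0 < η s := by
    intro s
    induction s with
    | zero =>
      rw [hη0]
      exact div_pos (hγpos 0) (mul_pos hcl hS0)
    | succ n ihn =>
      rw [hη n]
      have h1 : 0 < Real.sqrt (∑ s ∈ range (n + 2), γ s * ‖G s (x s)‖ ^ 2) :=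
        Real.sqrt_pos.mpr (hApos (n + 1))
      exact lt_min (div_pos (hγpos (n + 1)) (mul_pos hcl h1)) ihn
  have hηle0 : ∀ s, η s ≤ η 0 := by
    intro s
    induction s with
    | zero => exact le_refl _
    | succ n ihn => exact le_trans (by rw [hη n]; exact min_le_right _ _) ihn
  have hlb : ∀ s z, fstar s ≤ f s z := fun s z => (hfstar s).1 ⟨z, rfl⟩
  have hD : ∀ s, ρ * (γ s * ‖G s (x s)‖ ^ 2) ≤ f s (x s) - fstar s := by
    intro s
    have h1 := hArmijo s
    have h2 := hlb s (x s - γ s • G s (x s))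
    linarith
  have hDnn : ∀ s, 0 ≤ f s (x s) - fstar s := fun s => by linarith [hlb s (x s)]
  have hkey : ∀ s, η s * ‖G s (x s)‖ ^ 2 - 2 * (f s (x s) - fstar s) ≤ b := by
    intro s
    set A := ∑ i ∈ range (s + 1), γ i * ‖G i (x i)‖ ^ 2 with hAdef
    have hA : 0 < A := hApos s
    have hsA : 0 < Real.sqrt A := Real.sqrt_pos.mpr hA
    have hs1 : S0 ≤ Real.sqrt A := Real.sqrt_le_sqrt (hA0le s)
    have hηg : η s * ‖G s (x s)‖ ^ 2 ≤ (γ s * ‖G s (x s)‖ ^ 2) / (c_l * Real.sqrt A) := by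
      have h := hηle s
      calc η s * ‖G s (x s)‖ ^ 2
          ≤ (γ s / (c_l * Real.sqrt A)) * ‖G s (x s)‖ ^ 2 :=
            mul_le_mul_of_nonneg_right h (hg2 s).le
        _ = (γ s * ‖G s (x s)‖ ^ 2) / (c_l * Real.sqrt A) := by ring
    have hDs := hD s
    rcases le_or_gt 1 (2 * ρ * (c_l * Real.sqrt A)) with hc | hc
    · have h1 : (γ s * ‖G s (x s)‖ ^ 2) / (c_l * Real.sqrt A) ≤ 2 * ρ * (γ s * ‖G s (x s)‖ ^ 2) := by
        rw [div_le_iff₀ (by positivity)]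
        nlinarith [mul_le_mul_of_nonneg_left hc (ha s).le]
      linarith
    · have hAsq : A = Real.sqrt A * Real.sqrt A := (Real.mul_self_sqrt hA.le).symm
      have hgoal : 4 * ρ ^ 2 * c_l ^ 2 * Real.sqrt A ^ 2 < 1 := by
        nlinarith [hc, Real.sqrt_nonneg A, mul_pos (mul_pos hρ0 hcl) hsA]
      have hAlt : 4 * ρ ^ 2 * c_l ^ 2 * A < 1 := by
        rwa [Real.sq_sqrt hA.le] at hgoal
      have haA : γ s * ‖G s (x s)‖ ^ 2 ≤ A := hAtle s
      have h1 : (γ s * ‖G s (x s)‖ ^ 2) / (c_l * Real.sqrt A) ≤ (γ s * ‖G s (x s)‖ ^ 2) / (c_l * S0) := by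
        apply div_le_div_of_nonneg_left (ha s).le (by positivity)
        exact mul_le_mul_of_nonneg_left hs1 hcl.le
      have h3 : 4 * ρ ^ 2 * c_l ^ 2 * (γ s * ‖G s (x s)‖ ^ 2) < 1 := by
        nlinarith [mul_le_mul_of_nonneg_left haA (by positivity : (0:ℝ) ≤ 4 * ρ ^ 2 * c_l ^ 2)]
      have h2 : (γ s * ‖G s (x s)‖ ^ 2) / (c_l * S0) ≤ b := by
        rw [hbdef, div_le_div_iff₀ (by positivity) (by positivity)]
        nlinarith [h3, mul_pos hcl hS0]
      linarith [hDnn s]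
  have hstep : ∀ s, ‖x (s + 1) - xstar‖ ^ 2 ≤
      (1 - μ * η s) * ‖x s - xstar‖ ^ 2 + η s * (2 * σ ^ 2 + b) := by
    intro s
    have hηp := hηpos s
    have hexp : ‖x (s + 1) - xstar‖ ^ 2 =
        ‖x s - xstar‖ ^ 2 - 2 * (η s * ⟪G s (x s), x s - xstar⟫) + η s ^ 2 * ‖G s (x s)‖ ^ 2 := by
      rw [hx s]
      have he : x s - η s • G s (x s) - xstar = (x s - xstar) - η s • G s (x s) := by abel
      rw [he, norm_sub_sq_real, real_inner_smul_right, norm_smul, Real.norm_eq_abs,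
        mul_pow, sq_abs, real_inner_comm]
    have hsc := hsconv s (x s) xstar
    have hinner : ⟪G s (x s), xstar - x s⟫ = -⟪G s (x s), x s - xstar⟫ := by
      rw [← neg_sub (x s) xstar, inner_neg_right]
    have hnrm : ‖xstar - x s‖ = ‖x s - xstar‖ := norm_sub_rev _ _
    rw [hinner, hnrm] at hsc
    have hI : ⟪G s (x s), x s - xstar⟫ ≥
        (f s (x s) - f s xstar) + μ / 2 * ‖x s - xstar‖ ^ 2 := by linarith
    have h1 : η s * (η s * ‖G s (x s)‖ ^ 2 - 2 * (f s (x s) - fstar s)) ≤ η s * b :=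
      mul_le_mul_of_nonneg_left (hkey s) hηp.le
    have h2 : 2 * η s * (f s xstar - fstar s) ≤ 2 * η s * σ ^ 2 :=
      mul_le_mul_of_nonneg_left (hσ2 s) (by positivity)
    have h3 : 2 * η s * ⟪G s (x s), x s - xstar⟫ ≥
        2 * η s * ((f s (x s) - f s xstar) + μ / 2 * ‖x s - xstar‖ ^ 2) :=
      mul_le_mul_of_nonneg_left hI (by positivity)
    rw [hexp]
    nlinarith [h1, h2, h3]
  have h2σb : 0 ≤ 2 * σ ^ 2 + b := by positivity
  set M := max (‖x 0 - xstar‖ ^ 2) (max ((2 * σ ^ 2 + b) / μ) ((2 * σ ^ 2 + b) * η 0)) with hM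
  intro t
  induction t with
  | zero => exact le_max_left _ _
  | succ n ih =>
    have hμM : 2 * σ ^ 2 + b ≤ μ * M := by
      have h : (2 * σ ^ 2 + b) / μ ≤ M := le_trans (le_max_left _ _) (le_max_right _ _)
      rw [div_le_iff₀ hμ] at h; linarith
    have hη0M : (2 * σ ^ 2 + b) * η 0 ≤ M := le_trans (le_max_right _ _) (le_max_right _ _)
    have hstepn := hstep n
    rcases le_or_gt (μ * η n) 1 with hcase | hcase
    · have h1 : (1 - μ * η n) * ‖x n - xstar‖ ^ 2 ≤ (1 - μ * η n) * M :=
        mul_le_mul_of_nonneg_left ih (by linarith)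
      have h2 : η n * (2 * σ ^ 2 + b) ≤ η n * (μ * M) :=
        mul_le_mul_of_nonneg_left hμM (hηpos n).le
      linarith [h1, h2, hstepn]
    · have h1 : (1 - μ * η n) * ‖x n - xstar‖ ^ 2 ≤ 0 :=
        mul_nonpos_of_nonpos_of_nonneg (by linarith) (sq_nonneg _)
      have h2 : η n * (2 * σ ^ 2 + b) ≤ η 0 * (2 * σ ^ 2 + b) :=
        mul_le_mul_of_nonneg_right (hηle0 n) h2σb
      linarith [hstepn, h1, h2, hη0M]
end

section
/- Let n ≥ 1 and 1 ≤ B ≤ n be integers, let L > 0 and μ_F > 0, and for i ∈ {1, …, n} let f_i : E → ℝ be convex, differentiable and L-smooth. Set f = (1/n)·Σ_{i=1}^n f_i and suppose x* ∈ E satisfies ∇f(x*) = 0. Fix points w, x̂ ∈ E. For each subset S ⊆ {1, …, n} with |S| = B, set f_S = (1/B)·Σ_{i∈S} f_i and define F_S : E → ℝ by F_S(x) = f_S(x) + ⟨x, ∇f(w) − ∇f_S(w)⟩ + (μ_F/2)‖x − x̂‖², with infimum F_S* = inf_{y} F_S(y). Then, averaging uniformly over all such subsets S (there are N = C(n, B)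 of them): (1/N)·Σ_S (F_S(x̂) − F_S*) ≤ f(x̂) − f(x*) + (1/(2μ_F))·(1/N)·Σ_S ‖∇f_S(w) − ∇f_S(x*)‖². -/
/-!
Fix a batch `S`. Convexity of the `f_i` gives `f_S x ≥ f_S x* + ⟪∇f_S x*, x - x*⟫`, so `F_S` is
bounded below by an affine function plus `(μ_F/2)‖x - x̂‖²`, whose infimum is explicit. Hence
`F_S x̂ - F_S* ≤ f_S x̂ - f_S x* - ⟪∇f_S x*, x̂ - x*⟫ + ‖D_S - ∇f w‖² / (2μ_F)` with
`D_S = ∇f_S w - ∇f_S x*`. Each index lies in `C(n-1, B-1)` batches, so batch means average to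
full means: the `f_S` terms average to `f`, the linear term averages to `⟪∇f x*, x̂ - x*⟫ = 0`,
and `D_S` averages to `∇f w`, so the last term is a variance, bounded by the second moment.
-/

open Finset RealInnerProductSpace

/-- The minibatch gradient `∇f_S(y) = (1/B)·Σ_{i∈S} ∇f_i(y)`. -/
noncomputable def batchGrad {d n : ℕ} (B : ℕ)
    (G : Fin n → EuclideanSpace ℝ (Fin d) → EuclideanSpace ℝ (Fin d))
    (S : Finset (Fin n)) (y : EuclideanSpace ℝ (Fin d)) : EuclideanSpace ℝ (Fin d) :=
  (B : ℝ)⁻¹ • ∑ i ∈ S, G i y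

/-- The proxy function
`F_S(x) = f_S(x) + ⟨x, ∇f(w) − ∇f_S(w)⟩ + (μ_F/2)‖x − x̂‖²`, where
`f_S = (1/B)·Σ_{i∈S} f_i` and `∇f(w) = (1/n)·Σ_{i=1}^n ∇f_i(w)`. -/
noncomputable def proxyF {d n : ℕ} (B : ℕ) (μF : ℝ)
    (f : Fin n → EuclideanSpace ℝ (Fin d) → ℝ)
    (G : Fin n → EuclideanSpace ℝ (Fin d) → EuclideanSpace ℝ (Fin d))
    (w xhat : EuclideanSpace ℝ (Fin d)) (S : Finset (Fin n))
    (x : EuclideanSpace ℝ (Fin d)) : ℝ :=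
  (B : ℝ)⁻¹ * ∑ i ∈ S, f i x +
    ⟪x, ((n : ℝ)⁻¹ • ∑ i, G i w) - batchGrad B G S w⟫ +
    μF / 2 * ‖x - xhat‖ ^ 2

namespace Finset

variable {α M : Type*}

theorem card_filter_mem_powersetCard [DecidableEq α] {s : Finset α} {i : α} (hi : i ∈ s)
    {k : ℕ} (hk : 1 ≤ k) :
    #{S ∈ s.powersetCard k | i ∈ S} = (#s - 1).choose (k - 1) := by
  simpa using card_filter_powersetCard_subset {i} s k (singleton_subset_iff.2 hi) (by simpa)

theorem sum_powersetCard_sum [AddCommMonoid M] (s : Finset α) {k : ℕ} (hk : 1 ≤ k)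
    (v : α → M) :
    ∑ S ∈ s.powersetCard k, ∑ i ∈ S, v i = (#s - 1).choose (k - 1) • ∑ i ∈ s, v i := by
  classical
  rw [sum_comm' (t' := s) (s' := fun i => {S ∈ s.powersetCard k | i ∈ S}), smul_sum]
  · refine sum_congr rfl fun i hi => ?_
    rw [sum_const, card_filter_mem_powersetCard hi hk]
  · intro S i
    simp only [mem_powersetCard, mem_filter]
    exact ⟨fun h => ⟨h, h.1.1 h.2⟩, And.left⟩

theorem sum_powersetCard_inv_smul_sum {𝕜 : Type*} [Field 𝕜] [CharZero 𝕜] [AddCommGroup M]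
    [Module 𝕜 M] (s : Finset α) {k : ℕ} (hk : 1 ≤ k) (v : α → M) :
    ∑ S ∈ s.powersetCard k, (k : 𝕜)⁻¹ • ∑ i ∈ S, v i
      = ((#s).choose k : 𝕜) • ((#s : 𝕜)⁻¹ • ∑ i ∈ s, v i) := by
  obtain rfl | hs := s.eq_empty_or_nonempty
  · rw [powersetCard_eq_empty.2 (by simp; omega)]
    simp
  have hcount : (#s : 𝕜) * ((#s - 1).choose (k - 1) : 𝕜) = ((#s).choose k : 𝕜) * k := by
    have := Nat.add_one_mul_choose_eq (#s - 1) (k - 1)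
    rw [Nat.sub_add_cancel hs.card_pos, Nat.sub_add_cancel hk] at this
    exact_mod_cast this
  have hs0 : (#s : 𝕜) ≠ 0 := by exact_mod_cast hs.card_pos.ne'
  have hk0 : (k : 𝕜) ≠ 0 := by exact_mod_cast (by omega : k ≠ 0)
  rw [← smul_sum, sum_powersetCard_sum s hk, ← Nat.cast_smul_eq_nsmul 𝕜, smul_smul, smul_smul]
  congr 1
  field_simp
  linear_combination hcount

end Finset

section InnerProductSpace

variable {E ι : Type*} [NormedAddCommGroup E] [InnerProductSpace ℝ E]

theorem neg_inner_le_norm_sq_div_add {μ : ℝ} (hμ : 0 < μ) (a v : E) :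
    -⟪a, v⟫ ≤ ‖a‖ ^ 2 / (2 * μ) + μ / 2 * ‖v‖ ^ 2 := by
  have h := norm_add_sq_real a (μ • v)
  rw [norm_smul, inner_smul_right, Real.norm_of_nonneg hμ.le] at h
  have : 0 ≤ ‖a + μ • v‖ ^ 2 := sq_nonneg _
  rw [div_add' _ _ _ (by positivity), le_div_iff₀ (by positivity)]
  nlinarith

theorem sum_norm_sub_sq_le_sum_norm_sq (s : Finset ι) (X : ι → E) {m : E}
    (hm : (#s : ℝ) • m = ∑ i ∈ s, X i) :
    ∑ i ∈ s, ‖X i - m‖ ^ 2 ≤ ∑ i ∈ s, ‖X i‖ ^ 2 := by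
  have hcross : ∑ i ∈ s, ⟪X i, m⟫ = #s * ‖m‖ ^ 2 := by
    rw [← sum_inner, ← hm, real_inner_smul_left, real_inner_self_eq_norm_sq]
  calc ∑ i ∈ s, ‖X i - m‖ ^ 2
      = ∑ i ∈ s, ‖X i‖ ^ 2 - 2 * ∑ i ∈ s, ⟪X i, m⟫ + #s * ‖m‖ ^ 2 := by
        simp only [norm_sub_sq_real, sum_add_distrib, sum_sub_distrib, ← mul_sum, sum_const,
          nsmul_eq_mul]
    _ = ∑ i ∈ s, ‖X i‖ ^ 2 - #s * ‖m‖ ^ 2 := by rw [hcross]; ring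
    _ ≤ ∑ i ∈ s, ‖X i‖ ^ 2 := sub_le_self _ (by positivity)

theorem sub_sInf_range_le {φ F : E → ℝ} {g c x₀ z : E} {μ : ℝ} (hμ : 0 < μ)
    (hsub : ∀ x, φ x₀ + ⟪g, x - x₀⟫ ≤ φ x)
    (hF : ∀ x, F x = φ x + ⟪x, c⟫ + μ / 2 * ‖x - z‖ ^ 2) :
    F z - sInf (Set.range F) ≤ φ z - φ x₀ - ⟪g, z - x₀⟫ + ‖g + c‖ ^ 2 / (2 * μ) := by
  have hlow : φ x₀ + ⟪g, z - x₀⟫ + ⟪z, c⟫ - ‖g + c‖ ^ 2 / (2 * μ) ≤ sInf (Set.range F) := by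
    refine le_csInf (Set.range_nonempty F) (Set.forall_mem_range.2 fun x => ?_)
    have hsplit : ⟪g, x - x₀⟫ + ⟪x, c⟫ = ⟪g, z - x₀⟫ + ⟪z, c⟫ + ⟪g + c, x - z⟫ := by
      simp only [inner_add_left, inner_sub_right, real_inner_comm c]
      ring
    linarith [hF x, hsub x, neg_inner_le_norm_sq_div_add hμ (g + c) (x - z)]
  have hFz : F z = φ z + ⟪z, c⟫ := by simp [hF]
  linarith

end InnerProductSpace

noncomputable def batchMean {d n : ℕ} (B : ℕ) (f : Fin n → EuclideanSpace ℝ (Fin d) → ℝ)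
    (S : Finset (Fin n)) (x : EuclideanSpace ℝ (Fin d)) : ℝ :=
  (B : ℝ)⁻¹ * ∑ i ∈ S, f i x

section Minibatch

variable {d n : ℕ} (B : ℕ) {f : Fin n → EuclideanSpace ℝ (Fin d) → ℝ}
  {G : Fin n → EuclideanSpace ℝ (Fin d) → EuclideanSpace ℝ (Fin d)}

theorem batchMean_add_inner_batchGrad_le (hconv : ∀ i u v, f i v ≥ f i u + ⟪G i u, v - u⟫)
    (S : Finset (Fin n)) (u v : EuclideanSpace ℝ (Fin d)) :
    batchMean B f S u + ⟪batchGrad B G S u, v - u⟫ ≤ batchMean B f S v := by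
  rw [batchMean, batchMean, batchGrad, real_inner_smul_left, sum_inner, ← mul_add,
    ← sum_add_distrib]
  exact mul_le_mul_of_nonneg_left (sum_le_sum fun i _ => hconv i u v) (by positivity)

theorem sum_batchMean (hB : 1 ≤ B) (x : EuclideanSpace ℝ (Fin d)) :
    ∑ S ∈ powersetCard B univ, batchMean B f S x = n.choose B * ((n : ℝ)⁻¹ * ∑ i, f i x) := by
  simpa [batchMean] using sum_powersetCard_inv_smul_sum (𝕜 := ℝ) univ hB (f · x)

theorem sum_batchGrad (hB : 1 ≤ B) (x : EuclideanSpace ℝ (Fin d)) :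
    ∑ S ∈ powersetCard B univ, batchGrad B G S x
      = (n.choose B : ℝ) • ((n : ℝ)⁻¹ • ∑ i, G i x) := by
  simpa [batchGrad] using sum_powersetCard_inv_smul_sum (𝕜 := ℝ) univ hB (G · x)

theorem proxyF_sub_sInf_le {μF : ℝ} (hμF : 0 < μF)
    (hconv : ∀ i u v, f i v ≥ f i u + ⟪G i u, v - u⟫)
    (xstar w xhat : EuclideanSpace ℝ (Fin d)) (S : Finset (Fin n)) :
    proxyF B μF f G w xhat S xhat - sInf (Set.range (proxyF B μF f G w xhat S))
      ≤ batchMean B f S xhat - batchMean B f S xstar - ⟪batchGrad B G S xstar, xhat - xstar⟫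
        + ‖batchGrad B G S w - batchGrad B G S xstar - (n : ℝ)⁻¹ • ∑ i, G i w‖ ^ 2
          / (2 * μF) := by
  have h := sub_sInf_range_le (F := proxyF B μF f G w xhat S) (z := xhat) hμF
    (batchMean_add_inner_batchGrad_le B hconv S xstar) (fun _ => rfl)
  rwa [show batchGrad B G S xstar + ((n : ℝ)⁻¹ • ∑ i, G i w - batchGrad B G S w)
      = -(batchGrad B G S w - batchGrad B G S xstar - (n : ℝ)⁻¹ • ∑ i, G i w) by abel,
    norm_neg] at h

end Minibatch

theorem stmt_19_general {d : ℕ} (n B : ℕ) (hB1 : 1 ≤ B) (hBn : B ≤ n)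
    (μF : ℝ) (hμF : 0 < μF)
    (f : Fin n → EuclideanSpace ℝ (Fin d) → ℝ)
    (G : Fin n → EuclideanSpace ℝ (Fin d) → EuclideanSpace ℝ (Fin d))
    (hconv : ∀ i u v, f i v ≥ f i u + ⟪G i u, v - u⟫)
    (xstar w xhat : EuclideanSpace ℝ (Fin d))
    (hcrit : ((n : ℝ)⁻¹ • ∑ i, G i xstar) = (0 : EuclideanSpace ℝ (Fin d))) :
    ((n.choose B : ℝ))⁻¹ *
        ∑ S ∈ Finset.powersetCard B (Finset.univ : Finset (Fin n)),
          (proxyF B μF f G w xhat S xhat - sInf (Set.range (proxyF B μF f G w xhat S)))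
      ≤ ((n : ℝ)⁻¹ * ∑ i, f i xhat) - ((n : ℝ)⁻¹ * ∑ i, f i xstar) +
        1 / (2 * μF) *
          (((n.choose B : ℝ))⁻¹ *
            ∑ S ∈ Finset.powersetCard B (Finset.univ : Finset (Fin n)),
              ‖batchGrad B G S w - batchGrad B G S xstar‖ ^ 2) := by
  set P := powersetCard B (univ : Finset (Fin n))
  have hN : (0 : ℝ) < n.choose B := by exact_mod_cast Nat.choose_pos hBn
  have hgrad_star : ∑ S ∈ P, batchGrad B G S xstar = 0 := by
    rw [sum_batchGrad B hB1, hcrit, smul_zero]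
  have hvar := sum_norm_sub_sq_le_sum_norm_sq P
    (fun S => batchGrad B G S w - batchGrad B G S xstar) (m := (n : ℝ)⁻¹ • ∑ i, G i w)
    (by simp [P, sum_sub_distrib, hgrad_star, sum_batchGrad B hB1])
  calc (n.choose B : ℝ)⁻¹ * ∑ S ∈ P,
        (proxyF B μF f G w xhat S xhat - sInf (Set.range (proxyF B μF f G w xhat S)))
      ≤ (n.choose B : ℝ)⁻¹ * ∑ S ∈ P, (batchMean B f S xhat - batchMean B f S xstar
          - ⟪batchGrad B G S xstar, xhat - xstar⟫
          + ‖batchGrad B G S w - batchGrad B G S xstar - (n : ℝ)⁻¹ • ∑ i, G i w‖ ^ 2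
            / (2 * μF)) := by
        gcongr with S
        exact proxyF_sub_sInf_le B hμF hconv xstar w xhat S
    _ = ((n : ℝ)⁻¹ * ∑ i, f i xhat) - ((n : ℝ)⁻¹ * ∑ i, f i xstar) + 1 / (2 * μF) *
          ((n.choose B : ℝ)⁻¹ * ∑ S ∈ P,
            ‖batchGrad B G S w - batchGrad B G S xstar - (n : ℝ)⁻¹ • ∑ i, G i w‖ ^ 2) := by
        rw [sum_add_distrib, sum_sub_distrib, sum_sub_distrib, sum_batchMean B hB1,
          sum_batchMean B hB1, ← sum_inner, hgrad_star, inner_zero_left, ← sum_div]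
        field_simp
        ring
    _ ≤ _ := by gcongr

/-- Variance-reduction lemma: for convex, differentiable, `L`-smooth `f_i` with
`f = (1/n)Σ f_i`, `∇f(x*) = 0`, and the proxy functions `F_S` (over all `B`-element
subsets `S` of `{1,…,n}`, with infima `F_S*`), averaging uniformly over `S`:
`avg_S (F_S(x̂) − F_S*) ≤ f(x̂) − f(x*) + (1/(2μ_F))·avg_S ‖∇f_S(w) − ∇f_S(x*)‖²`. -/
theorem stmt_19 {d : ℕ} (n B : ℕ) (hn : 1 ≤ n) (hB1 : 1 ≤ B) (hBn : B ≤ n)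
    (L μF : ℝ) (hL : 0 < L) (hμF : 0 < μF)
    (f : Fin n → EuclideanSpace ℝ (Fin d) → ℝ)
    (G : Fin n → EuclideanSpace ℝ (Fin d) → EuclideanSpace ℝ (Fin d))
    (hgrad : ∀ i y, HasGradientAt (f i) (G i y) y)
    (hconv : ∀ i u v, f i v ≥ f i u + ⟪G i u, v - u⟫)
    (hsmooth : ∀ i u v, ‖G i u - G i v‖ ≤ L * ‖u - v‖)
    (xstar w xhat : EuclideanSpace ℝ (Fin d))
    (hcrit : ((n : ℝ)⁻¹ • ∑ i, G i xstar) = (0 : EuclideanSpace ℝ (Fin d))) :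
    ((n.choose B : ℝ))⁻¹ *
        ∑ S ∈ Finset.powersetCard B (Finset.univ : Finset (Fin n)),
          (proxyF B μF f G w xhat S xhat - sInf (Set.range (proxyF B μF f G w xhat S)))
      ≤ ((n : ℝ)⁻¹ * ∑ i, f i xhat) - ((n : ℝ)⁻¹ * ∑ i, f i xstar) +
        1 / (2 * μF) *
          (((n.choose B : ℝ))⁻¹ *
            ∑ S ∈ Finset.powersetCard B (Finset.univ : Finset (Fin n)),
              ‖batchGrad B G S w - batchGrad B G S xstar‖ ^ 2) :=
  stmt_19_general n B hB1 hBn μF hμF f G hconv xstar w xhat hcrit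
end
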